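/- arXiv:2007.10438 — 10 statements merged into one kernel-verified Lean document; each statement's English description precedes it below -/
import Mathlib

section
/- Let m be a positive integer, let 0 ≤ Δ(1) ≤ Δ(2) ≤ ... ≤ Δ(m) ≤ 1 be a nondecreasing threshold sequence, and for a vector p ∈ [0,1]^m define the step-up rejection count R(p) = max{r ∈ {0,1,...,m} : p_(r) ≤ Δ(r)} (with the convention R(p) = 0 if p_(r) > Δ(r) for all r ≥ 1, where p_(1) ≤ ... ≤ p_(m) are the order statistics of p), and define the rejection set ℛ(p) = {j : p_j ≤ Δ(R(p))} when R(p) ≥ 1 and ℛ(p) = ∅ otherwise. Fix i ∈ {1,...,m} and let p^(i←0) denote the vector p with its i-th coordinate replaced by 0. Then the following three conditions are equivalent: (1) p_i ≤ Δ(R(p^(i←0))); (2) i ∈ ℛ(p); (3) ℛ(p) = ℛ(p^(i←0)). -/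
open Classical

/-- The step-up rejection count: `R(p) = max {r ∈ {0,…,m} : p_(r) ≤ Δ(r)}` (with `R(p) = 0`
if no `r ≥ 1` satisfies the condition), where `p_(r)` is the `r`-th smallest coordinate of `p`,
obtained via the sorting permutation `Tuple.sort`. The thresholds are `Δ(1), …, Δ(m)`. -/
noncomputable def stepUpCount {m : ℕ} (Δ : ℕ → ℝ) (p : Fin m → ℝ) : ℕ :=
  Nat.findGreatest
    (fun r => ∃ h : r - 1 < m, 0 < r ∧ p (Tuple.sort p ⟨r - 1, h⟩) ≤ Δ r) m

/-- The step-up rejection set: `ℛ(p) = {j : p_j ≤ Δ(R(p))}` if `R(p) ≥ 1`, else `∅`. -/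
noncomputable def rejectSet {m : ℕ} (Δ : ℕ → ℝ) (p : Fin m → ℝ) : Finset (Fin m) :=
  if 0 < stepUpCount Δ p then
    Finset.univ.filter (fun j => p j ≤ Δ (stepUpCount Δ p))
  else ∅

namespace StepUpAux

variable {m : ℕ}

noncomputable def cnt (p : Fin m → ℝ) (t : ℝ) : ℕ :=
  (Finset.univ.filter (fun j => p j ≤ t)).card

lemma cnt_le_m (p : Fin m → ℝ) (t : ℝ) : cnt p t ≤ m := by
  simpa [cnt] using (Finset.card_filter_le Finset.univ (fun j => p j ≤ t))

lemma cnt_mono_t (p : Fin m → ℝ) {s t : ℝ} (h : s ≤ t) : cnt p s ≤ cnt p t := by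
  apply Finset.card_le_card
  intro j hj
  simp only [Finset.mem_filter, Finset.mem_univ, true_and] at hj ⊢
  exact hj.trans h

lemma sort_le_iff (p : Fin m → ℝ) (k : Fin m) (t : ℝ) :
    p (Tuple.sort p k) ≤ t ↔ (k : ℕ) + 1 ≤ cnt p t := by
  constructor
  · intro h
    have hsub : (Finset.Iic k).image (Tuple.sort p) ⊆
        Finset.univ.filter (fun j => p j ≤ t) := by
      intro j hj
      simp only [Finset.mem_image, Finset.mem_Iic] at hj
      obtain ⟨a, ha, rfl⟩ := hj
      simp only [Finset.mem_filter, Finset.mem_univ, true_and]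
      exact le_trans (Tuple.monotone_sort p ha) h
    have hcard := Finset.card_le_card hsub
    rwa [Finset.card_image_of_injective _ (Tuple.sort p).injective,
      Fin.card_Iic] at hcard
  · intro h
    by_contra hc
    push_neg at hc
    have hsub : Finset.univ.filter (fun j => p j ≤ t) ⊆
        (Finset.Iio k).image (Tuple.sort p) := by
      intro j hj
      simp only [Finset.mem_filter, Finset.mem_univ, true_and] at hj
      refine Finset.mem_image.2 ⟨(Tuple.sort p).symm j, ?_, by simp⟩
      simp only [Finset.mem_Iio]
      by_contra hlt
      push_neg at hlt
      have := le_trans (Tuple.monotone_sort p hlt) (by simpa using hj)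
      exact absurd this (not_le.2 hc)
    have hcard := Finset.card_le_card hsub
    rw [Finset.card_image_of_injective _ (Tuple.sort p).injective,
      Fin.card_Iio] at hcard
    have : (k : ℕ) + 1 ≤ (k : ℕ) := le_trans h hcard
    omega

lemma prop_iff (Δ : ℕ → ℝ) (p : Fin m → ℝ) (r : ℕ) :
    (∃ h : r - 1 < m, 0 < r ∧ p (Tuple.sort p ⟨r - 1, h⟩) ≤ Δ r) ↔
    (0 < r ∧ r ≤ m ∧ r ≤ cnt p (Δ r)) := by
  constructor
  · rintro ⟨h, hr, hle⟩
    refine ⟨hr, by omega, ?_⟩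
    have := (sort_le_iff p ⟨r - 1, h⟩ (Δ r)).1 hle
    simpa [Nat.sub_add_cancel hr] using this
  · rintro ⟨hr, hrm, hle⟩
    have h : r - 1 < m := by omega
    refine ⟨h, hr, (sort_le_iff p ⟨r - 1, h⟩ (Δ r)).2 ?_⟩
    simpa [Nat.sub_add_cancel hr] using hle

lemma stepUp_le (Δ : ℕ → ℝ) (p : Fin m → ℝ) : stepUpCount Δ p ≤ m :=
  Nat.findGreatest_le m

lemma le_stepUp (Δ : ℕ → ℝ) (p : Fin m → ℝ) {r : ℕ} (hr : 0 < r) (hrm : r ≤ m)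
    (hc : r ≤ cnt p (Δ r)) : r ≤ stepUpCount Δ p :=
  Nat.le_findGreatest hrm ((prop_iff Δ p r).2 ⟨hr, hrm, hc⟩)

lemma stepUp_spec (Δ : ℕ → ℝ) (p : Fin m → ℝ) (h : 0 < stepUpCount Δ p) :
    stepUpCount Δ p ≤ cnt p (Δ (stepUpCount Δ p)) := by
  have := Nat.findGreatest_of_ne_zero (n := m)
    (P := fun r => ∃ h : r - 1 < m, 0 < r ∧ p (Tuple.sort p ⟨r - 1, h⟩) ≤ Δ r)
    rfl (Nat.pos_iff_ne_zero.1 h)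
  exact ((prop_iff Δ p _).1 this).2.2

lemma stepUp_not (Δ : ℕ → ℝ) (p : Fin m → ℝ) {r : ℕ}
    (h1 : stepUpCount Δ p < r) (h2 : r ≤ m) : cnt p (Δ r) < r := by
  by_contra hc
  exact Nat.findGreatest_is_greatest h1 h2
    ((prop_iff Δ p r).2 ⟨by omega, h2, not_lt.1 hc⟩)

end StepUpAux

open StepUpAux

/-- Lemma 1, the step-up lemma: for a step-up procedure with nondecreasing
thresholds `0 ≤ Δ(1) ≤ ⋯ ≤ Δ(m) ≤ 1` applied to `p ∈ [0,1]^m`, and `p^(i←0)` the vector `p`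
with its `i`-th coordinate replaced by `0`, the following are equivalent:
(1) `p_i ≤ Δ(R(p^(i←0)))`; (2) `i ∈ ℛ(p)`; (3) `ℛ(p) = ℛ(p^(i←0))`. -/
theorem stepup_lemma {m : ℕ} (hm : 0 < m) (Δ : ℕ → ℝ)
    (hΔ0 : 0 ≤ Δ 1) (hΔm : Δ m ≤ 1)
    (hΔmono : ∀ r, 1 ≤ r → r < m → Δ r ≤ Δ (r + 1))
    (p : Fin m → ℝ) (hp : ∀ j, p j ∈ Set.Icc (0 : ℝ) 1) (i : Fin m) :
    List.TFAE
      [p i ≤ Δ (stepUpCount Δ (Function.update p i 0)),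
       i ∈ rejectSet Δ p,
       rejectSet Δ p = rejectSet Δ (Function.update p i 0)] := by
  set q : Fin m → ℝ := Function.update p i 0 with hqdef
  set R : ℕ := stepUpCount Δ p with hRdef
  set R' : ℕ := stepUpCount Δ q with hR'def
  have hΔle : ∀ a b, 1 ≤ a → a ≤ b → b ≤ m → Δ a ≤ Δ b := by
    intro a b ha hab hbm
    induction b with
    | zero => omega
    | succ n ih =>
      rcases Nat.lt_or_ge a (n + 1) with h | h
      · exact le_trans (ih (by omega) (by omega)) (hΔmono n (by omega) (by omega))
      · have : a = n + 1 := by omega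
        subst this; exact le_rfl
  have hqi : q i = 0 := Function.update_self i 0 p
  have hq_le : ∀ j, q j ≤ p j := by
    intro j
    rcases eq_or_ne j i with rfl | hj
    · rw [hqi]; exact (hp j).1
    · rw [hqdef, Function.update_of_ne hj]
  have hcnt : ∀ t, cnt p t ≤ cnt q t := by
    intro t
    apply Finset.card_le_card
    intro j hj
    simp only [Finset.mem_filter, Finset.mem_univ, true_and] at hj ⊢
    exact (hq_le j).trans hj
  have hRm : R ≤ m := stepUp_le Δ p
  have hR'm : R' ≤ m := stepUp_le Δ q
  have hR'pos : 0 < R' := by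
    refine le_stepUp Δ q Nat.one_pos hm ?_
    have : i ∈ Finset.univ.filter (fun j => q j ≤ Δ 1) := by
      simp [hqi, hΔ0]
    exact Finset.card_pos.2 ⟨i, this⟩
  have hΔR'0 : (0 : ℝ) ≤ Δ R' := hΔ0.trans (hΔle 1 R' le_rfl hR'pos hR'm)
  have hRR' : R ≤ R' := by
    rcases Nat.eq_zero_or_pos R with h | h
    · omega
    · exact le_stepUp Δ q h hRm ((stepUp_spec Δ p h).trans (hcnt _))
  have hcnt_eq : ∀ f : Fin m → ℝ, 0 < stepUpCount Δ f →
      cnt f (Δ (stepUpCount Δ f)) = stepUpCount Δ f := by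
    intro f hf
    have h1 := stepUp_spec Δ f hf
    have hfm := stepUp_le Δ f
    rcases eq_or_lt_of_le hfm with h | h
    · have := cnt_le_m f (Δ (stepUpCount Δ f))
      omega
    · have h2 : cnt f (Δ (stepUpCount Δ f + 1)) < stepUpCount Δ f + 1 :=
        stepUp_not Δ f (Nat.lt_succ_self _) h
      have h3 := cnt_mono_t f (hΔmono (stepUpCount Δ f) hf h)
      omega
  have key : p i ≤ Δ R' → R = R' ∧
      Finset.univ.filter (fun j => p j ≤ Δ R') =
        Finset.univ.filter (fun j => q j ≤ Δ R') := by
    intro h1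
    have hfe : Finset.univ.filter (fun j => p j ≤ Δ R') =
        Finset.univ.filter (fun j => q j ≤ Δ R') := by
      apply Finset.filter_congr
      intro j _
      rcases eq_or_ne j i with rfl | hj
      · simp only [hqi]
        exact iff_of_true h1 hΔR'0
      · rw [hqdef, Function.update_of_ne hj]
    refine ⟨le_antisymm hRR' ?_, hfe⟩
    have hcq : cnt q (Δ R') = R' := hcnt_eq q hR'pos
    have hcp : cnt p (Δ R') = R' := by
      rw [cnt, hfe]; exact hcq
    exact le_stepUp Δ p hR'pos hR'm hcp.ge
  have hmem : ∀ f : Fin m → ℝ, (i ∈ rejectSet Δ f ↔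
      0 < stepUpCount Δ f ∧ f i ≤ Δ (stepUpCount Δ f)) := by
    intro f
    unfold rejectSet
    split
    · simp_all
    · simp_all
  tfae_have 1 → 2 := by
    intro h1
    have ⟨hRR, _⟩ := key h1
    rw [hmem, ← hRdef, hRR]
    exact ⟨hR'pos, h1⟩
  tfae_have 2 → 3 := by
    intro h2
    rw [hmem, ← hRdef] at h2
    obtain ⟨hRpos, hpi⟩ := h2
    have hpi' : p i ≤ Δ R' := hpi.trans (hΔle R R' hRpos hRR' hR'm)
    obtain ⟨hRR, hfe⟩ := key hpi'
    rw [rejectSet, rejectSet, ← hRdef, ← hR'def, if_pos hRpos, if_pos hR'pos, hRR]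
    exact hfe
  tfae_have 3 → 1 := by
    intro h3
    have hiq : i ∈ rejectSet Δ q := by
      rw [hmem, ← hR'def]
      exact ⟨hR'pos, by rw [hqi]; exact hΔR'0⟩
    rw [← h3, hmem, ← hRdef] at hiq
    exact hiq.2.trans (hΔle R R' hiq.1 hRR' hR'm)
  tfae_finish
end

section
/- Let (Ω, 𝔉, ℙ) be a probability space, m a positive integer, α ∈ (0,1], and H₀ ⊆ {1,...,m}. Let X : Ω → E be a random element of a measurable space E, and for each i ∈ {1,...,m} let p_i : E → [0,1], τ_i : E → [0,1], and R̂_i : E → {1,2,...,m} be measurable. Let u₁,...,u_m be i.i.d. Uniform(0,1) random variables independent of X. Define the initial rejection set ℛ₊(x) = {i : p_i(x) ≤ τ_i(x)}, the pruned rejection count R(x,u) = max{r ∈ {0,1,...,m} : |{j ∈ ℛ₊(x) : u_j ≤ r/R̂_j(x)}| ≥ r}, and the final rejection set ℛ(x,u) = {i ∈ ℛ₊(x) : u_i ≤ R(x,u)/R̂_i(x)}. Assume the calibration condition: for every i ∈ H₀, E[ 1{p_i(X) ≤ τ_i(X)} / R̂_i(X) ] ≤ α/m. Then the false discovery rate satisfies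 E[ |ℛ(X,u) ∩ H₀| / max(|ℛ(X,u)|, 1) ] ≤ α·|H₀|/m. -/
open MeasureTheory ProbabilityTheory Classical

/-- The initial rejection set `ℛ₊ = {i : p_i ≤ τ_i}`, given the vectors of p-values and
calibrated thresholds. -/
noncomputable def initRej {m : ℕ} (pv τv : Fin m → ℝ) : Finset (Fin m) :=
  Finset.univ.filter (fun i => pv i ≤ τv i)

/-- The pruned rejection count
`R = max {r ∈ {0,…,m} : |{j ∈ ℛ₊ : u_j ≤ r / R̂_j}| ≥ r}` of the secondary BH-type
procedure applied to the auxiliary uniforms. -/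
noncomputable def pruneCount {m : ℕ} (Rplus : Finset (Fin m)) (Rhat : Fin m → ℕ)
    (u : Fin m → ℝ) : ℕ :=
  Nat.findGreatest
    (fun r => r ≤ (Rplus.filter (fun j => u j ≤ (r : ℝ) / (Rhat j : ℝ))).card) m

/-- The final rejection set `ℛ = {i ∈ ℛ₊ : u_i ≤ R / R̂_i}`. -/
noncomputable def finalRej {m : ℕ} (Rplus : Finset (Fin m)) (Rhat : Fin m → ℕ)
    (u : Fin m → ℝ) : Finset (Fin m) :=
  Rplus.filter (fun i => u i ≤ (pruneCount Rplus Rhat u : ℝ) / (Rhat i : ℝ))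

/-!
Write `R⁽ⁱ⁾` for the pruned count computed with `u_i` replaced by `0`. Lowering `u_i` can only
raise the count, and does not change it when `i` is rejected; hence `i ∈ ℛ` iff `i ∈ ℛ₊` and
`u_i ≤ R⁽ⁱ⁾ / R̂_i`, in which case `|ℛ| = R = R⁽ⁱ⁾`. So the false discovery proportion is
`∑_{i ∈ H₀} 1{i ∈ ℛ₊, u_i ≤ R⁽ⁱ⁾ / R̂_i} / max(R⁽ⁱ⁾, 1)`. Given `X = x`, `R⁽ⁱ⁾` is a function
of `(u_j)_{j ≠ i}`, hence independent of the uniform `u_i`, so the `i`-th term has conditional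
expectation at most `1{i ∈ ℛ₊} / R̂_i`. Integrating over `X` and applying the calibration
condition bounds each term by `α / m`.
-/

open Finset Function

section Pruning

variable {m : ℕ} (Rplus : Finset (Fin m)) (Rhat : Fin m → ℕ)

noncomputable def looCount (v : Fin m → ℝ) (i : Fin m) : ℕ :=
  pruneCount Rplus Rhat (update v i 0)

noncomputable def looTerm (v : Fin m → ℝ) (i : Fin m) : ℝ :=
  if i ∈ Rplus ∧ v i ≤ (looCount Rplus Rhat v i : ℝ) / Rhat i then
    1 / ((max (looCount Rplus Rhat v i) 1 : ℕ) : ℝ)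
  else 0

variable {Rplus Rhat} {v w : Fin m → ℝ}

lemma le_pruneCount {r : ℕ} (hrm : r ≤ m)
    (hr : r ≤ (Rplus.filter fun j => w j ≤ (r : ℝ) / Rhat j).card) :
    r ≤ pruneCount Rplus Rhat w :=
  Nat.le_findGreatest hrm hr

lemma pruneCount_le_card_finalRej : pruneCount Rplus Rhat v ≤ (finalRej Rplus Rhat v).card :=
  Nat.findGreatest_spec (P := fun r => r ≤ (Rplus.filter fun j => v j ≤ (r : ℝ) / Rhat j).card)
    (Nat.zero_le m) (Nat.zero_le _)

lemma pruneCount_le_pruneCount_of_subset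
    (h : finalRej Rplus Rhat v ⊆
      Rplus.filter fun j => w j ≤ (pruneCount Rplus Rhat v : ℝ) / Rhat j) :
    pruneCount Rplus Rhat v ≤ pruneCount Rplus Rhat w :=
  le_pruneCount (Nat.findGreatest_le m) (pruneCount_le_card_finalRej.trans (card_le_card h))

theorem card_finalRej : (finalRej Rplus Rhat v).card = pruneCount Rplus Rhat v := by
  refine le_antisymm (le_pruneCount (card_le_univ _ |>.trans_eq (Fintype.card_fin m)) ?_)
    pruneCount_le_card_finalRej
  refine card_le_card fun j hj => ?_
  rw [finalRej, mem_filter] at hj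
  exact mem_filter.2 ⟨hj.1, hj.2.trans (by gcongr; exact pruneCount_le_card_finalRej)⟩

lemma pruneCount_le_looCount (i : Fin m) :
    pruneCount Rplus Rhat v ≤ looCount Rplus Rhat v i := by
  refine pruneCount_le_pruneCount_of_subset fun j hj => ?_
  simp only [finalRej, mem_filter] at hj ⊢
  refine ⟨hj.1, ?_⟩
  rcases eq_or_ne j i with rfl | hji
  · rw [update_self]
    positivity
  · rw [update_of_ne hji]
    exact hj.2

lemma looCount_le_pruneCount {i : Fin m} (hi : v i ≤ (looCount Rplus Rhat v i : ℝ) / Rhat i) :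
    looCount Rplus Rhat v i ≤ pruneCount Rplus Rhat v := by
  refine pruneCount_le_pruneCount_of_subset fun j hj => ?_
  simp only [finalRej, mem_filter] at hj ⊢
  refine ⟨hj.1, ?_⟩
  rcases eq_or_ne j i with rfl | hji
  · exact hi
  · simpa only [update_of_ne hji] using hj.2

theorem mem_finalRej_iff {i : Fin m} :
    i ∈ finalRej Rplus Rhat v ↔ i ∈ Rplus ∧ v i ≤ (looCount Rplus Rhat v i : ℝ) / Rhat i := by
  simp only [finalRej, mem_filter]
  refine and_congr_right fun _ => ⟨fun h => h.trans ?_, fun h => h.trans ?_⟩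
  · gcongr
    exact pruneCount_le_looCount i
  · gcongr
    exact looCount_le_pruneCount h

lemma looCount_eq_pruneCount {i : Fin m} (hi : i ∈ finalRej Rplus Rhat v) :
    looCount Rplus Rhat v i = pruneCount Rplus Rhat v :=
  (looCount_le_pruneCount (mem_finalRej_iff.1 hi).2).antisymm (pruneCount_le_looCount i)

theorem fdp_eq_sum_looTerm (H0 : Finset (Fin m)) :
    ((finalRej Rplus Rhat v ∩ H0).card : ℝ) / ((max (finalRej Rplus Rhat v).card 1 : ℕ) : ℝ) =
      ∑ i ∈ H0, looTerm Rplus Rhat v i := by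
  rw [inter_comm, ← filter_mem_eq_inter, card_filter]
  push_cast
  rw [sum_div]
  refine sum_congr rfl fun i _ => ?_
  by_cases hi : i ∈ finalRej Rplus Rhat v
  · rw [looTerm, if_pos hi, if_pos (mem_finalRej_iff.1 hi), card_finalRej,
      looCount_eq_pruneCount hi, Nat.cast_max, Nat.cast_one]
  · rw [looTerm, if_neg hi, if_neg (mt mem_finalRej_iff.2 hi), zero_div]

end Pruning

lemma norm_ite_one_div_natCast_le_one (p : Prop) [Decidable p] (n : ℕ) :
    ‖if p then 1 / (n : ℝ) else 0‖ ≤ 1 := by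
  split_ifs
  · rw [one_div, norm_inv, Real.norm_natCast]
    exact Nat.cast_inv_le_one n
  · simp

section Measurability

variable {α : Type*} [MeasurableSpace α] {m : ℕ} {S : α → Finset (Fin m)} {d : α → Fin m → ℕ}
  {w : α → Fin m → ℝ}

theorem measurable_pruneCount (hS : ∀ j, MeasurableSet {z | j ∈ S z})
    (hd : ∀ j, Measurable fun z => d z j) (hw : Measurable w) :
    Measurable fun z => pruneCount (S z) (d z) (w z) := by
  refine measurable_findGreatest fun r _ => measurableSet_le measurable_const ?_
  have hfilter : ∀ z, (S z).filter (fun j => w z j ≤ (r : ℝ) / d z j) =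
      univ.filter fun j => j ∈ S z ∧ w z j ≤ (r : ℝ) / d z j := fun z => by
    ext j
    simp
  simp_rw [hfilter, card_filter]
  refine Finset.measurable_sum _ fun j _ => Measurable.ite ?_ measurable_const measurable_const
  exact (hS j).inter <| measurableSet_le ((measurable_pi_apply j).comp hw)
    (measurable_const.div (measurable_from_nat.comp (hd j)))

theorem measurable_looTerm (hS : ∀ j, MeasurableSet {z | j ∈ S z})
    (hd : ∀ j, Measurable fun z => d z j) (hw : Measurable w) (i : Fin m) :
    Measurable fun z => looTerm (S z) (d z) (w z) i := by
  have hK : Measurable fun z => looCount (S z) (d z) (w z) i :=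
    measurable_pruneCount hS hd (measurable_update_left.comp hw)
  refine Measurable.ite ((hS i).inter (measurableSet_le ((measurable_pi_apply i).comp hw)
    ((measurable_from_nat.comp hK).div (measurable_from_nat.comp (hd i))))) ?_ measurable_const
  exact (measurable_from_nat (f := fun k : ℕ => 1 / ((max k 1 : ℕ) : ℝ))).comp hK

end Measurability

section Probability

variable {Ω : Type*} [MeasurableSpace Ω] {P : Measure Ω}

theorem ProbabilityTheory.IndepFun.integral_comp_le [IsFiniteMeasure P] {α β : Type*}
    [MeasurableSpace α] [MeasurableSpace β] {X : Ω → α} {Y : Ω → β} (hX : AEMeasurable X P)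
    (hY : AEMeasurable Y P) (hXY : IndepFun X Y P) {f : α × β → ℝ} (hf : Measurable f)
    (hfi : Integrable (fun ω => f (X ω, Y ω)) P) {g : α → ℝ} (hg : Measurable g)
    (hgi : Integrable (fun ω => g (X ω)) P) (hfg : ∀ x, ∫ ω, f (x, Y ω) ∂P ≤ g x) :
    ∫ ω, f (X ω, Y ω) ∂P ≤ ∫ ω, g (X ω) ∂P := by
  have hlaw : P.map (fun ω => (X ω, Y ω)) = (P.map X).prod (P.map Y) :=
    (indepFun_iff_map_prod_eq_prod_map_map hX hY).1 hXY
  have hfi' : Integrable f ((P.map X).prod (P.map Y)) := by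
    rw [← hlaw]
    exact (integrable_map_measure hf.aestronglyMeasurable (hX.prodMk hY)).2 hfi
  have hgi' : Integrable g (P.map X) :=
    (integrable_map_measure hg.aestronglyMeasurable hX).2 hgi
  calc ∫ ω, f (X ω, Y ω) ∂P = ∫ x, ∫ y, f (x, y) ∂(P.map Y) ∂(P.map X) := by
        rw [← integral_prod _ hfi', ← hlaw, integral_map (hX.prodMk hY) hf.aestronglyMeasurable]
    _ ≤ ∫ x, g x ∂(P.map X) := integral_mono hfi'.integral_prod_left hgi' fun x =>
        (integral_map hY (hf.comp measurable_prodMk_left).aestronglyMeasurable).trans_le (hfg x)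
    _ = ∫ ω, g (X ω) ∂P := integral_map hX hg.aestronglyMeasurable

theorem integral_ite_le_div_max_le [IsProbabilityMeasure P] {K : Ω → ℕ} {U : Ω → ℝ}
    (hK : Measurable K) (hU : Measurable U) (hKU : IndepFun K U P)
    (hsup : ∀ c, 0 ≤ c → P.real {ω | U ω ≤ c} ≤ c) {d : ℝ} (hd : 0 < d) :
    ∫ ω, (if U ω ≤ K ω / d then 1 / ((max (K ω) 1 : ℕ) : ℝ) else 0) ∂P ≤ 1 / d := by
  have hf : Measurable fun z : ℕ × ℝ => if z.2 ≤ z.1 / d then 1 / ((max z.1 1 : ℕ) : ℝ) else 0 :=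
    Measurable.ite
      (measurableSet_le measurable_snd ((measurable_from_nat.comp measurable_fst).div_const d))
      ((measurable_from_nat (f := fun k : ℕ => 1 / ((max k 1 : ℕ) : ℝ))).comp measurable_fst)
      measurable_const
  have hinner : ∀ k : ℕ,
      ∫ ω, (if U ω ≤ k / d then 1 / ((max k 1 : ℕ) : ℝ) else 0) ∂P ≤ 1 / d := fun k => by
    have hs : MeasurableSet {ω | U ω ≤ k / d} := measurableSet_le hU measurable_const
    calc ∫ ω, (if U ω ≤ k / d then 1 / ((max k 1 : ℕ) : ℝ) else 0) ∂P
        = P.real {ω | U ω ≤ k / d} * (1 / ((max k 1 : ℕ) : ℝ)) :=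
          integral_indicator_const _ hs
      _ ≤ k / d * (1 / ((max k 1 : ℕ) : ℝ)) := by
          gcongr
          exact hsup _ (by positivity)
      _ = k * (1 / ((max k 1 : ℕ) : ℝ)) / d := by ring
      _ ≤ 1 / d := by
          gcongr
          rw [mul_one_div]
          exact div_le_one_of_le₀ (by exact_mod_cast le_max_left k 1) (by positivity)
  calc _ ≤ ∫ _ω, 1 / d ∂P :=
        hKU.integral_comp_le hK.aemeasurable hU.aemeasurable hf
          (Integrable.of_bound (hf.comp (hK.prodMk hU)).aestronglyMeasurable 1
            (ae_of_all _ fun _ => norm_ite_one_div_natCast_le_one _ _))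
          measurable_const (integrable_const _) hinner
    _ = 1 / d := by simp

lemma measureReal_setOf_le_le_of_map_eq_uniform {U : Ω → ℝ} (hU : Measurable U)
    (hunif : P.map U = volume.restrict (Set.Icc 0 1)) {c : ℝ} (hc : 0 ≤ c) :
    P.real {ω | U ω ≤ c} ≤ c := by
  have hlaw : P.real {ω | U ω ≤ c} = volume.real (Set.Iic c ∩ Set.Icc 0 1) := by
    rw [← measureReal_restrict_apply measurableSet_Iic, ← hunif,
      map_measureReal_apply hU measurableSet_Iic]
    rfl
  calc P.real {ω | U ω ≤ c} ≤ volume.real (Set.Icc 0 c) := by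
        rw [hlaw]
        exact measureReal_mono (fun t ht => ⟨ht.2.1, ht.1⟩) measure_Icc_lt_top.ne
    _ = c := by rw [Real.volume_real_Icc_of_le hc, sub_zero]

theorem ProbabilityTheory.iIndepFun.indepFun_update {ι β : Type*} [Fintype ι] [DecidableEq ι]
    [MeasurableSpace β] {u : ι → Ω → β} (hu : ∀ j, Measurable (u j)) (h : iIndepFun u P)
    (i : ι) (c : β) :
    IndepFun (fun ω => update (fun j => u j ω) i c) (u i) P := by
  let extend : ({j // j ∈ univ.erase i} → β) → ι → β :=
    fun w j => if hj : j ∈ univ.erase i then w ⟨j, hj⟩ else c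
  have hextend : Measurable extend := measurable_pi_lambda _ fun j => by
    by_cases hj : j ∈ univ.erase i
    · simpa only [extend, dif_pos hj] using measurable_pi_apply _
    · simpa only [extend, dif_neg hj] using measurable_const
  have hupdate : (fun ω => update (fun j => u j ω) i c) =
      extend ∘ fun ω (j : {j // j ∈ univ.erase i}) => u j ω := by
    ext ω j
    by_cases hj : j = i
    · subst hj
      simp [extend]
    · simp [extend, hj]
  rw [hupdate]
  exact (h.indepFun_finset (univ.erase i) {i} (disjoint_singleton_right.2 (notMem_erase i _))
    hu).comp hextend (measurable_pi_apply ⟨i, mem_singleton_self i⟩)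

theorem integral_looTerm_le [IsProbabilityMeasure P] {m : ℕ} {u : Fin m → Ω → ℝ}
    (hu : ∀ j, Measurable (u j)) (hind : iIndepFun u P) {i : Fin m}
    (hsup : ∀ c, 0 ≤ c → P.real {ω | u i ω ≤ c} ≤ c) (Rplus : Finset (Fin m))
    (Rhat : Fin m → ℕ) (hRi : 1 ≤ Rhat i) :
    ∫ ω, looTerm Rplus Rhat (fun j => u j ω) i ∂P ≤ if i ∈ Rplus then 1 / (Rhat i : ℝ) else 0 := by
  by_cases hi : i ∈ Rplus
  · have hF : Measurable (pruneCount Rplus Rhat) :=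
      measurable_pruneCount (fun _ => MeasurableSet.const _) (fun _ => measurable_const)
        measurable_id
    simp only [looTerm, hi, true_and, if_true]
    exact integral_ite_le_div_max_le (hF.comp (measurable_update_left.comp
      (measurable_pi_lambda _ hu))) (hu i) ((hind.indepFun_update hu i 0).comp hF measurable_id)
      hsup (by exact_mod_cast hRi)
  · simp [looTerm, hi]

end Probability

theorem fdr_control_conditional_calibration_general
    {Ω E : Type*} [MeasurableSpace Ω] [MeasurableSpace E]
    (P : Measure Ω) [IsProbabilityMeasure P]
    {m : ℕ} (α : ℝ)
    (H0 : Finset (Fin m))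
    (X : Ω → E) (hX : Measurable X)
    (p τ : Fin m → E → ℝ) (Rhat : Fin m → E → ℕ)
    (hpmeas : ∀ i, Measurable (p i)) (hτmeas : ∀ i, Measurable (τ i))
    (hRmeas : ∀ i, Measurable (Rhat i))
    (hRval : ∀ i x, Rhat i x ∈ Set.Icc 1 m)
    (u : Fin m → Ω → ℝ) (humeas : ∀ i, Measurable (u i))
    (huindep : iIndepFun u P)
    (huunif : ∀ i, P.map (u i) = volume.restrict (Set.Icc (0 : ℝ) 1))
    (hXu : IndepFun X (fun ω i => u i ω) P)
    (hcal : ∀ i ∈ H0,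
      ∫ ω, (if p i (X ω) ≤ τ i (X ω) then (1 : ℝ) / (Rhat i (X ω) : ℝ) else 0) ∂P
        ≤ α / m) :
    ∫ ω, ((finalRej (initRej (fun i => p i (X ω)) (fun i => τ i (X ω)))
              (fun i => Rhat i (X ω)) (fun i => u i ω) ∩ H0).card : ℝ) /
          ((max (finalRej (initRej (fun i => p i (X ω)) (fun i => τ i (X ω)))
              (fun i => Rhat i (X ω)) (fun i => u i ω)).card 1 : ℕ) : ℝ) ∂P
      ≤ α * H0.card / m := by
  have hU : Measurable fun ω j => u j ω := measurable_pi_lambda _ humeas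
  have hterm (i : Fin m) : Measurable fun z : E × (Fin m → ℝ) =>
      looTerm (initRej (fun j => p j z.1) (fun j => τ j z.1)) (fun j => Rhat j z.1) z.2 i :=
    measurable_looTerm (fun j => by
        simp only [initRej, mem_filter, mem_univ, true_and]
        exact measurableSet_le ((hpmeas j).comp measurable_fst) ((hτmeas j).comp measurable_fst))
      (fun j => (hRmeas j).comp measurable_fst) measurable_snd i
  have hcalm (i : Fin m) : Measurable fun x => if p i x ≤ τ i x then 1 / (Rhat i x : ℝ) else 0 :=
    Measurable.ite (measurableSet_le (hpmeas i) (hτmeas i))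
      (measurable_const.div (measurable_from_nat.comp (hRmeas i))) measurable_const
  have hint {f : Ω → ℝ} (hf : Measurable f) (hf1 : ∀ ω, ‖f ω‖ ≤ 1) : Integrable f P :=
    .of_bound hf.aestronglyMeasurable 1 (ae_of_all _ hf1)
  calc _ = ∑ i ∈ H0, ∫ ω, looTerm (initRej (fun j => p j (X ω)) (fun j => τ j (X ω)))
          (fun j => Rhat j (X ω)) (fun j => u j ω) i ∂P := by
        simp_rw [fdp_eq_sum_looTerm]
        exact integral_finsetSum _ fun i _ => hint ((hterm i).comp (hX.prodMk hU))
          fun _ => norm_ite_one_div_natCast_le_one _ _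
    _ ≤ ∑ i ∈ H0, ∫ ω, (if p i (X ω) ≤ τ i (X ω) then 1 / (Rhat i (X ω) : ℝ) else 0) ∂P :=
        sum_le_sum fun i _ => hXu.integral_comp_le hX.aemeasurable hU.aemeasurable (hterm i)
          (hint ((hterm i).comp (hX.prodMk hU)) fun _ => norm_ite_one_div_natCast_le_one _ _)
          (hcalm i) (hint ((hcalm i).comp hX) fun _ => norm_ite_one_div_natCast_le_one _ _)
          fun x => by
            simpa [initRej] using integral_looTerm_le humeas huindep
              (fun c hc => measureReal_setOf_le_le_of_map_eq_uniform (humeas i) (huunif i) hc)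
              (initRej (fun j => p j x) (fun j => τ j x)) (fun j => Rhat j x) (hRval i x).1
    _ ≤ ∑ _i ∈ H0, α / m := sum_le_sum hcal
    _ = α * H0.card / m := by rw [sum_const, nsmul_eq_mul]; ring

/-- Theorem 1, FDR control of the three-step conditional calibration
procedure: if for every true null `i ∈ H₀` the calibration condition
`E[1{p_i(X) ≤ τ_i(X)} / R̂_i(X)] ≤ α/m` holds, and the auxiliary uniforms `u_1, …, u_m` are
i.i.d. `Uniform(0,1)` independent of the data `X`, then the FDR of the final rejection set is
at most `α·|H₀|/m`. -/
theorem fdr_control_conditional_calibration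
    {Ω E : Type*} [MeasurableSpace Ω] [MeasurableSpace E]
    (P : Measure Ω) [IsProbabilityMeasure P]
    {m : ℕ} (hm : 0 < m) (α : ℝ) (hα : α ∈ Set.Ioc (0 : ℝ) 1)
    (H0 : Finset (Fin m))
    (X : Ω → E) (hX : Measurable X)
    (p τ : Fin m → E → ℝ) (Rhat : Fin m → E → ℕ)
    (hpmeas : ∀ i, Measurable (p i)) (hτmeas : ∀ i, Measurable (τ i))
    (hRmeas : ∀ i, Measurable (Rhat i))
    (hpval : ∀ i x, p i x ∈ Set.Icc (0 : ℝ) 1)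
    (hτval : ∀ i x, τ i x ∈ Set.Icc (0 : ℝ) 1)
    (hRval : ∀ i x, Rhat i x ∈ Set.Icc 1 m)
    (u : Fin m → Ω → ℝ) (humeas : ∀ i, Measurable (u i))
    (huindep : iIndepFun u P)
    (huunif : ∀ i, P.map (u i) = volume.restrict (Set.Icc (0 : ℝ) 1))
    (hXu : IndepFun X (fun ω i => u i ω) P)
    (hcal : ∀ i ∈ H0,
      ∫ ω, (if p i (X ω) ≤ τ i (X ω) then (1 : ℝ) / (Rhat i (X ω) : ℝ) else 0) ∂P
        ≤ α / m) :
    ∫ ω, ((finalRej (initRej (fun i => p i (X ω)) (fun i => τ i (X ω)))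
              (fun i => Rhat i (X ω)) (fun i => u i ω) ∩ H0).card : ℝ) /
          ((max (finalRej (initRej (fun i => p i (X ω)) (fun i => τ i (X ω)))
              (fun i => Rhat i (X ω)) (fun i => u i ω)).card 1 : ℕ) : ℝ) ∂P
      ≤ α * H0.card / m :=
  fdr_control_conditional_calibration_general P α H0 X hX p τ Rhat hpmeas hτmeas hRmeas hRval u
    humeas huindep huunif hXu hcal
end

section
/- Let (Ω, 𝔉, ℙ) be a probability space, m a positive integer, X : Ω → E a random element, and u₁,...,u_m i.i.d. Uniform(0,1) random variables independent of X. Let ℛ₊(x) ⊆ {1,...,m} and R̂_j(x) ∈ {1,2,...,m} be measurable functions of x ∈ E, and define R(x,u) = max{r ∈ {0,1,...,m} : |{j ∈ ℛ₊(x) : u_j ≤ r/R̂_j(x)}| ≥ r}. Then for every fixed i ∈ {1,...,m}: E[ 1{i ∈ ℛ₊(X)} · 1{u_i ≤ R(X,u)/R̂_i(X)} / max(R(X,u),1) ] ≤ E[ 1{i ∈ ℛ₊(X)} / R̂_i(X) ]. -/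
/-!
Freeze `X` and the uniforms `u_j`, `j ≠ i`, and let `R₀` be the count obtained with `u_i`
replaced by `0`; `R₀` does not depend on `u_i`. By the step-up property, on the event that `i` is
rejected the count equals `R₀`, so the integrand is at most `1{u_i ≤ R₀ / R̂_i} / max(R₀, 1)`.
Integrating `u_i ~ Uniform(0,1)` gives at most `(R₀ / R̂_i) / max(R₀, 1) ≤ 1 / R̂_i`. Independence
of `X` from the product-distributed vector `u` lets us integrate over `u` first (Tonelli).
-/

open MeasureTheory ProbabilityTheory Classical

open scoped ENNReal

section PruneCount

variable {m : ℕ} (S : Finset (Fin m)) (R : Fin m → ℕ)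

theorem pruneCount_le (u : Fin m → ℝ) : pruneCount S R u ≤ m :=
  Nat.findGreatest_le m

theorem pruneCount_le_card_filter {u : Fin m → ℝ} (h : pruneCount S R u ≠ 0) :
    pruneCount S R u ≤ (S.filter fun j => u j ≤ (pruneCount S R u : ℝ) / (R j : ℝ)).card :=
  Nat.findGreatest_of_ne_zero
    (P := fun r => r ≤ (S.filter fun j => u j ≤ (r : ℝ) / (R j : ℝ)).card) rfl h

variable {S R} in
theorem le_pruneCount_s2 {u : Fin m → ℝ} {r : ℕ} (hr : r ≤ m)
    (h : r ≤ (S.filter fun j => u j ≤ (r : ℝ) / (R j : ℝ)).card) : r ≤ pruneCount S R u :=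
  Nat.le_findGreatest hr h

theorem pruneCount_antitone : Antitone (pruneCount S R) := fun _ _ huv =>
  Nat.findGreatest_mono
    (fun _ hr => hr.trans <| Finset.card_le_card <| Finset.monotone_filter_right S
      fun j _ hj => (huv j).trans hj) le_rfl

/-- Lowering `u i` to `0` cannot raise the count when `i` is rejected: at the new count
`R₀ ≥ R(u)` the index `i` passes the threshold `R₀ / R i` under `u` as well, so `R₀` also
witnesses the count of `u`. -/
theorem pruneCount_update_zero {u : Fin m → ℝ} {i : Fin m} (hi : i ∈ S) (hu : 0 ≤ u i)
    (hrej : u i ≤ (pruneCount S R u : ℝ) / (R i : ℝ)) :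
    pruneCount S R (Function.update u i 0) = pruneCount S R u := by
  set R₀ := pruneCount S R (Function.update u i 0)
  have hle : pruneCount S R u ≤ R₀ :=
    pruneCount_antitone S R (update_le_iff.2 ⟨hu, fun _ _ => le_rfl⟩)
  rcases Nat.eq_zero_or_pos R₀ with h₀ | hpos
  · omega
  have hui : u i ≤ (R₀ : ℝ) / (R i : ℝ) :=
    hrej.trans (div_le_div_of_nonneg_right (by exact_mod_cast hle) (Nat.cast_nonneg _))
  have hfilter : (S.filter fun j => Function.update u i 0 j ≤ (R₀ : ℝ) / (R j : ℝ))
      = S.filter fun j => u j ≤ (R₀ : ℝ) / (R j : ℝ) := by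
    refine Finset.filter_congr fun j _ => ?_
    rcases eq_or_ne j i with rfl | hj
    · simp only [Function.update_self]
      exact ⟨fun _ => hui, fun _ => by positivity⟩
    · rw [Function.update_of_ne hj]
  have hspec := pruneCount_le_card_filter S R hpos.ne'
  rw [hfilter] at hspec
  exact le_antisymm (le_pruneCount_s2 (pruneCount_le S R _) hspec) hle

end PruneCount

noncomputable def pruneWeight {m : ℕ} (S : Finset (Fin m)) (R : Fin m → ℕ) (i : Fin m)
    (v : Fin m → ℝ) : ℝ :=
  if i ∈ S ∧ v i ≤ (pruneCount S R v : ℝ) / (R i : ℝ)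
  then (1 : ℝ) / ((max (pruneCount S R v) 1 : ℕ) : ℝ) else 0

noncomputable def pruneBound {m : ℕ} (S : Finset (Fin m)) (R : Fin m → ℕ) (i : Fin m) : ℝ :=
  if i ∈ S then (1 : ℝ) / (R i : ℝ) else 0

section Bounds

variable {m : ℕ} (S : Finset (Fin m)) (R : Fin m → ℕ) (i : Fin m)

theorem pruneWeight_nonneg (v : Fin m → ℝ) : 0 ≤ pruneWeight S R i v := by
  unfold pruneWeight; split_ifs <;> positivity

theorem pruneBound_nonneg : 0 ≤ pruneBound S R i := by
  unfold pruneBound; split_ifs <;> positivity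

theorem pruneBound_le_one : pruneBound S R i ≤ 1 := by
  unfold pruneBound; split_ifs <;> simp [Nat.cast_inv_le_one]

end Bounds

section Measurability

variable {α : Type*} [MeasurableSpace α] {m : ℕ} {S : α → Finset (Fin m)}
  {R : Fin m → α → ℕ} {V : α → Fin m → ℝ}

theorem measurable_pruneCount_s2 (hS : ∀ j, MeasurableSet {a | j ∈ S a})
    (hR : ∀ j, Measurable (R j)) (hV : Measurable V) :
    Measurable fun a => pruneCount (S a) (fun j => R j a) (V a) := by
  refine measurable_findGreatest fun r _ => measurableSet_le measurable_const ?_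
  have hcard : ∀ a, ((S a).filter fun j => V a j ≤ (r : ℝ) / (R j a : ℝ)).card
      = ∑ j, if j ∈ S a ∧ V a j ≤ (r : ℝ) / (R j a : ℝ) then 1 else 0 := fun a => by
    rw [← Finset.card_filter, Finset.filter_and, Finset.filter_mem_eq_inter, Finset.univ_inter,
      Finset.inter_filter, Finset.inter_univ]
  simp only [hcard]
  refine Finset.measurable_sum _ fun j _ => Measurable.ite ?_ measurable_const measurable_const
  exact (hS j).inter <| measurableSet_le ((measurable_pi_apply j).comp hV)
    ((measurable_from_top (f := fun n : ℕ => (r : ℝ) / n)).comp (hR j))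

theorem measurable_pruneWeight (hS : ∀ j, MeasurableSet {a | j ∈ S a})
    (hR : ∀ j, Measurable (R j)) (hV : Measurable V) (i : Fin m) :
    Measurable fun a => pruneWeight (S a) (fun j => R j a) i (V a) := by
  have hcount := measurable_pruneCount_s2 hS hR hV
  refine Measurable.ite ((hS i).inter <| measurableSet_le ((measurable_pi_apply i).comp hV) ?_)
    ((measurable_from_top (f := fun n : ℕ => (1 : ℝ) / ((max n 1 : ℕ) : ℝ))).comp hcount)
    measurable_const
  exact (measurable_from_top (f := fun n : ℕ => (n : ℝ))).comp hcount |>.div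
    ((measurable_from_top (f := fun n : ℕ => (n : ℝ))).comp (hR i))

theorem measurable_pruneBound (hS : ∀ j, MeasurableSet {a | j ∈ S a})
    (hR : ∀ j, Measurable (R j)) (i : Fin m) :
    Measurable fun a => pruneBound (S a) (fun j => R j a) i :=
  Measurable.ite (hS i) ((measurable_from_top (f := fun n : ℕ => (1 : ℝ) / n)).comp (hR i))
    measurable_const

end Measurability

theorem lintegral_pi_le_of_forall_lintegral_update_le {ι : Type*} [Fintype ι] [DecidableEq ι]
    {X : ι → Type*} [∀ i, MeasurableSpace (X i)] {μ : ∀ i, Measure (X i)}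
    [∀ i, IsProbabilityMeasure (μ i)] {f : (∀ i, X i) → ℝ≥0∞} (hf : Measurable f) (i : ι)
    {c : ℝ≥0∞} (h : ∀ x, ∫⁻ t, f (Function.update x i t) ∂μ i ≤ c) :
    ∫⁻ x, f x ∂Measure.pi μ ≤ c :=
  calc ∫⁻ x, f x ∂Measure.pi μ ≤ ∫⁻ _, c ∂Measure.pi μ :=
        lintegral_le_of_lmarginal_le {i} hf measurable_const fun x => by
          simpa only [lmarginal_singleton, lintegral_const, measure_univ, mul_one] using h x
    _ = c := by simp

noncomputable abbrev unitUniform : Measure ℝ := volume.restrict (Set.Icc 0 1)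

instance : IsProbabilityMeasure unitUniform := ⟨by simp [Real.volume_Icc]⟩

theorem unitUniform_Iic_le (d : ℝ) : unitUniform (Set.Iic d) ≤ ENNReal.ofReal d := by
  rw [Measure.restrict_apply measurableSet_Iic]
  calc volume (Set.Iic d ∩ Set.Icc 0 1) ≤ volume (Set.Icc 0 d) :=
        measure_mono fun t ht => ⟨ht.2.1, ht.1⟩
    _ = ENNReal.ofReal d := by rw [Real.volume_Icc, sub_zero]

section PruneWeight

variable {m : ℕ} {S : Finset (Fin m)} {R : Fin m → ℕ} {i : Fin m}

theorem ofReal_pruneWeight_update_le (hi : i ∈ S) (y : Fin m → ℝ) {t : ℝ} (ht : 0 ≤ t) :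
    ENNReal.ofReal (pruneWeight S R i (Function.update y i t)) ≤
      (Set.Iic ((pruneCount S R (Function.update y i 0) : ℝ) / (R i : ℝ))).indicator
        (fun _ => ENNReal.ofReal
          ((1 : ℝ) / ((max (pruneCount S R (Function.update y i 0)) 1 : ℕ) : ℝ))) t := by
  unfold pruneWeight
  rw [Function.update_self]
  split_ifs with hrej
  · have heq := pruneCount_update_zero S R hi (u := Function.update y i t)
      (by rwa [Function.update_self]) (by rw [Function.update_self]; exact hrej.2)
    rw [Function.update_idem] at heq
    rw [heq, Set.indicator_of_mem (Set.mem_Iic.2 hrej.2)]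
  · rw [ENNReal.ofReal_zero]
    exact zero_le

variable (S R i) in
theorem lintegral_pruneWeight_le :
    ∫⁻ v, ENNReal.ofReal (pruneWeight S R i v) ∂Measure.pi (fun _ => unitUniform)
      ≤ ENNReal.ofReal (pruneBound S R i) := by
  refine lintegral_pi_le_of_forall_lintegral_update_le
    (measurable_pruneWeight (fun _ => MeasurableSet.const _) (fun _ => measurable_const)
      measurable_id i).ennreal_ofReal i fun y => ?_
  by_cases hi : i ∈ S
  swap
  · simp [pruneWeight, pruneBound, hi]
  set R₀ := pruneCount S R (Function.update y i 0)
  have hR₀ : (R₀ : ℝ) / ((max R₀ 1 : ℕ) : ℝ) ≤ 1 :=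
    div_le_one_of_le₀ (by exact_mod_cast le_max_left R₀ 1) (Nat.cast_nonneg _)
  set a : ℝ := 1 / ((max R₀ 1 : ℕ) : ℝ)
  set d : ℝ := R₀ / R i
  calc ∫⁻ t, ENNReal.ofReal (pruneWeight S R i (Function.update y i t)) ∂unitUniform
      ≤ ∫⁻ t, (Set.Iic d).indicator (fun _ => ENNReal.ofReal a) t ∂unitUniform := by
        refine lintegral_mono_ae ?_
        filter_upwards [ae_restrict_mem measurableSet_Icc] with t ht
        exact ofReal_pruneWeight_update_le hi y ht.1
    _ = ENNReal.ofReal a * unitUniform (Set.Iic d) := lintegral_indicator_const measurableSet_Iic _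
    _ ≤ ENNReal.ofReal a * ENNReal.ofReal d := by gcongr; exact unitUniform_Iic_le d
    _ = ENNReal.ofReal ((R₀ : ℝ) / ((max R₀ 1 : ℕ) : ℝ) * (1 / R i)) := by
        rw [← ENNReal.ofReal_mul (by positivity)]
        congr 1
        ring
    _ ≤ ENNReal.ofReal (pruneBound S R i) := by
        rw [pruneBound, if_pos hi]
        exact ENNReal.ofReal_le_ofReal (mul_le_of_le_one_left (by positivity) hR₀)

end PruneWeight

theorem lintegral_comp_le_of_indepFun {Ω E V : Type*} [MeasurableSpace Ω] [MeasurableSpace E]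
    [MeasurableSpace V] {P : Measure Ω} [IsFiniteMeasure P] {X : Ω → E} {U : Ω → V}
    (hXU : IndepFun X U P) (hX : Measurable X) (hU : Measurable U)
    {F : E × V → ℝ≥0∞} (hF : Measurable F) {G : E → ℝ≥0∞}
    (h : ∀ x, ∫⁻ v, F (x, v) ∂P.map U ≤ G x) :
    ∫⁻ ω, F (X ω, U ω) ∂P ≤ ∫⁻ ω, G (X ω) ∂P :=
  calc ∫⁻ ω, F (X ω, U ω) ∂P = ∫⁻ p, F p ∂(P.map X).prod (P.map U) := by
        rw [← (indepFun_iff_map_prod_eq_prod_map_map hX.aemeasurable hU.aemeasurable).1 hXU,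
          lintegral_map hF (hX.prodMk hU)]
    _ = ∫⁻ x, ∫⁻ v, F (x, v) ∂P.map U ∂P.map X := lintegral_prod _ hF.aemeasurable
    _ ≤ ∫⁻ x, G x ∂P.map X := lintegral_mono h
    _ ≤ ∫⁻ ω, G (X ω) ∂P := lintegral_map_le _ _

theorem integral_le_integral_of_lintegral_ofReal_le {α : Type*} [MeasurableSpace α]
    {μ : Measure α} {f g : α → ℝ} (hf₀ : 0 ≤ᵐ[μ] f) (hf : AEStronglyMeasurable f μ)
    (hg₀ : 0 ≤ᵐ[μ] g) (hg : Integrable g μ)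
    (h : ∫⁻ a, ENNReal.ofReal (f a) ∂μ ≤ ∫⁻ a, ENNReal.ofReal (g a) ∂μ) :
    ∫ a, f a ∂μ ≤ ∫ a, g a ∂μ := by
  rw [integral_eq_lintegral_of_nonneg_ae hf₀ hf,
    integral_eq_lintegral_of_nonneg_ae hg₀ hg.aestronglyMeasurable]
  exact ENNReal.toReal_mono hg.lintegral_lt_top.ne h

theorem pruning_key_inequality_general
    {Ω E : Type*} [MeasurableSpace Ω] [MeasurableSpace E]
    (P : Measure Ω) [IsProbabilityMeasure P]
    {m : ℕ}
    (X : Ω → E) (hX : Measurable X)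
    (Rplus : E → Finset (Fin m)) (hRplus : ∀ i, MeasurableSet {x : E | i ∈ Rplus x})
    (Rhat : Fin m → E → ℕ) (hRmeas : ∀ i, Measurable (Rhat i))
    (u : Fin m → Ω → ℝ) (humeas : ∀ i, Measurable (u i))
    (huindep : iIndepFun u P)
    (huunif : ∀ i, P.map (u i) = volume.restrict (Set.Icc (0 : ℝ) 1))
    (hXu : IndepFun X (fun ω j => u j ω) P)
    (i : Fin m) :
    ∫ ω, (if i ∈ Rplus (X ω) ∧
            u i ω ≤ (pruneCount (Rplus (X ω)) (fun j => Rhat j (X ω)) (fun j => u j ω) : ℝ) /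
              (Rhat i (X ω) : ℝ)
          then (1 : ℝ) /
            ((max (pruneCount (Rplus (X ω)) (fun j => Rhat j (X ω)) (fun j => u j ω)) 1 : ℕ) : ℝ)
          else 0) ∂P
      ≤ ∫ ω, (if i ∈ Rplus (X ω) then (1 : ℝ) / (Rhat i (X ω) : ℝ) else 0) ∂P := by
  have hU : Measurable fun ω j => u j ω := measurable_pi_lambda _ humeas
  have hlaw : P.map (fun ω j => u j ω) = Measure.pi fun _ => unitUniform := by
    rw [(iIndepFun_iff_map_fun_eq_pi_map fun j => (humeas j).aemeasurable).1 huindep]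
    simp only [huunif]
  have hweight : Measurable fun p : E × (Fin m → ℝ) =>
      pruneWeight (Rplus p.1) (fun j => Rhat j p.1) i p.2 :=
    measurable_pruneWeight (fun j => measurable_fst (hRplus j))
      (fun j => (hRmeas j).comp measurable_fst) measurable_snd i
  have hbound := measurable_pruneBound hRplus hRmeas i
  change ∫ ω, pruneWeight (Rplus (X ω)) (fun j => Rhat j (X ω)) i (fun j => u j ω) ∂P
    ≤ ∫ ω, pruneBound (Rplus (X ω)) (fun j => Rhat j (X ω)) i ∂P
  refine integral_le_integral_of_lintegral_ofReal_le
    (.of_forall fun _ => pruneWeight_nonneg _ _ i _)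
    (hweight.comp (hX.prodMk hU)).aestronglyMeasurable
    (.of_forall fun _ => pruneBound_nonneg _ _ i)
    (Integrable.of_bound (hbound.comp hX).aestronglyMeasurable 1 (.of_forall fun _ => ?_)) ?_
  · exact (Real.norm_of_nonneg (pruneBound_nonneg _ _ i)).trans_le (pruneBound_le_one _ _ i)
  · exact lintegral_comp_le_of_indepFun hXu hX hU hweight.ennreal_ofReal
      (G := fun x => ENNReal.ofReal (pruneBound (Rplus x) (fun j => Rhat j x) i))
      fun x => hlaw ▸ lintegral_pruneWeight_le (Rplus x) (fun j => Rhat j x) i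

/-- the key inequality controlling the randomized pruning step: if
`u_1, …, u_m` are i.i.d. `Uniform(0,1)`, independent of the data `X`, then for each fixed `i`,
`E[1{i ∈ ℛ₊(X)}·1{u_i ≤ R(X,u)/R̂_i(X)} / max(R(X,u),1)] ≤ E[1{i ∈ ℛ₊(X)} / R̂_i(X)]`. -/
theorem pruning_key_inequality
    {Ω E : Type*} [MeasurableSpace Ω] [MeasurableSpace E]
    (P : Measure Ω) [IsProbabilityMeasure P]
    {m : ℕ} (hm : 0 < m)
    (X : Ω → E) (hX : Measurable X)
    (Rplus : E → Finset (Fin m)) (hRplus : ∀ i, MeasurableSet {x : E | i ∈ Rplus x})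
    (Rhat : Fin m → E → ℕ) (hRmeas : ∀ i, Measurable (Rhat i))
    (hRval : ∀ i x, Rhat i x ∈ Set.Icc 1 m)
    (u : Fin m → Ω → ℝ) (humeas : ∀ i, Measurable (u i))
    (huindep : iIndepFun u P)
    (huunif : ∀ i, P.map (u i) = volume.restrict (Set.Icc (0 : ℝ) 1))
    (hXu : IndepFun X (fun ω j => u j ω) P)
    (i : Fin m) :
    ∫ ω, (if i ∈ Rplus (X ω) ∧
            u i ω ≤ (pruneCount (Rplus (X ω)) (fun j => Rhat j (X ω)) (fun j => u j ω) : ℝ) /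
              (Rhat i (X ω) : ℝ)
          then (1 : ℝ) /
            ((max (pruneCount (Rplus (X ω)) (fun j => Rhat j (X ω)) (fun j => u j ω)) 1 : ℕ) : ℝ)
          else 0) ∂P
      ≤ ∫ ω, (if i ∈ Rplus (X ω) then (1 : ℝ) / (Rhat i (X ω) : ℝ) else 0) ∂P :=
  pruning_key_inequality_general P X hX Rplus hRplus Rhat hRmeas u humeas huindep huunif hXu i
end

section
/- Let p₁,...,p_m be independent random variables taking values in [0,1], let H₀ ⊆ {1,...,m}, and assume each null p-value is superuniform: ℙ(p_i ≤ t) ≤ t for all t ∈ [0,1] and all i ∈ H₀. Fix α ∈ (0,1] and let ℛ be the rejection set of the Benjamini–Hochberg procedure BH(α), the step-up procedure with thresholds Δ(r) = αr/m. Then the false discovery rate satisfies E[ |ℛ ∩ H₀| / max(|ℛ|,1) ] ≤ α·|H₀|/m; moreover, if ℙ(p_i ≤ t) = t for all t ∈ [0,1] and all i ∈ H₀, equality holds. -/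
open MeasureTheory ProbabilityTheory Classical

/-!
Fix a null `i` and let `Rᵢ` be the number of rejections when the procedure is run with `pᵢ`
replaced by `0`. Because the thresholds increase, `i` is rejected exactly when
`pᵢ ≤ α Rᵢ / m`, and then the procedure rejects exactly `Rᵢ` hypotheses. So the false discovery
proportion is `∑_{i ∈ H₀} 1{pᵢ ≤ α Rᵢ / m} / Rᵢ`. As `Rᵢ` is a function of the other p-values,
it is independent of `pᵢ`, and splitting on the value of `Rᵢ` gives for each term
`∑_r ℙ(pᵢ ≤ α r / m) ℙ(Rᵢ = r) / r ≤ ∑_r (α / m) ℙ(Rᵢ = r) = α / m`,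
with equality when `pᵢ` is uniform.
-/

section StepUp

variable {m : ℕ}

noncomputable def countLE (q : Fin m → ℝ) (c : ℝ) : ℕ :=
  (Finset.univ.filter fun j => q j ≤ c).card

lemma countLE_le (q : Fin m → ℝ) (c : ℝ) : countLE q c ≤ m :=
  (Finset.card_filter_le _ _).trans_eq (Finset.card_fin m)

lemma countLE_mono {q : Fin m → ℝ} {c c' : ℝ} (h : c ≤ c') : countLE q c ≤ countLE q c' :=
  Finset.card_le_card fun j hj => by
    simp only [Finset.mem_filter] at hj ⊢
    exact ⟨hj.1, hj.2.trans h⟩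

lemma countLE_anti {q q' : Fin m → ℝ} (h : q' ≤ q) (c : ℝ) : countLE q c ≤ countLE q' c :=
  Finset.card_le_card fun j hj => by
    simp only [Finset.mem_filter] at hj ⊢
    exact ⟨hj.1, (h j).trans hj.2⟩

lemma countLE_comp_perm (q : Fin m → ℝ) (σ : Equiv.Perm (Fin m)) (c : ℝ) :
    countLE (q ∘ σ) c = countLE q c :=
  Finset.card_equiv σ (by simp)

lemma Monotone.le_iff_lt_countLE {s : Fin m → ℝ} (hs : Monotone s) (k : Fin m) (c : ℝ) :
    s k ≤ c ↔ (k : ℕ) < countLE s c := by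
  constructor
  · intro hk
    have hsub : Finset.Iic k ⊆ Finset.univ.filter fun j => s j ≤ c := fun j hj => by
      simpa using (hs (Finset.mem_Iic.mp hj)).trans hk
    simpa [countLE] using Finset.card_le_card hsub
  · intro hk
    by_contra! hck
    have hsub : (Finset.univ.filter fun j => s j ≤ c) ⊆ Finset.Iio k := fun j hj => by
      simp only [Finset.mem_filter, Finset.mem_univ, true_and] at hj
      exact Finset.mem_Iio.mpr (lt_of_not_ge fun hkj => (hck.trans_le (hs hkj)).not_ge hj)
    exact (Finset.card_le_card hsub).not_gt (by simpa [countLE] using hk)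

lemma exists_sort_le_iff_le_countLE (q : Fin m → ℝ) (c : ℝ) {r : ℕ} :
    (∃ h : r - 1 < m, 0 < r ∧ q (Tuple.sort q ⟨r - 1, h⟩) ≤ c) ↔ 0 < r ∧ r ≤ countLE q c := by
  have hsort (k : ℕ) (hk : k < m) : q (Tuple.sort q ⟨k, hk⟩) ≤ c ↔ k < countLE q c := by
    rw [← countLE_comp_perm q (Tuple.sort q)]
    exact (Tuple.monotone_sort q).le_iff_lt_countLE ⟨k, hk⟩ c
  constructor
  · rintro ⟨h, hr, hle⟩
    exact ⟨hr, by have := (hsort _ h).mp hle; omega⟩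
  · rintro ⟨hr, hle⟩
    have hrm : r - 1 < m := by have := countLE_le q c; omega
    exact ⟨hrm, hr, (hsort _ hrm).mpr (by omega)⟩

lemma stepUpCount_eq_findGreatest (Δ : ℕ → ℝ) (q : Fin m → ℝ) :
    stepUpCount Δ q = Nat.findGreatest (fun r => 0 < r ∧ r ≤ countLE q (Δ r)) m :=
  le_antisymm
    (Nat.findGreatest_mono_left (fun _ => (exists_sort_le_iff_le_countLE q _).mp) m)
    (Nat.findGreatest_mono_left (fun _ => (exists_sort_le_iff_le_countLE q _).mpr) m)

lemma stepUpCount_le (Δ : ℕ → ℝ) (q : Fin m → ℝ) : stepUpCount Δ q ≤ m :=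
  Nat.findGreatest_le m

variable {Δ : ℕ → ℝ}

lemma le_countLE_stepUpCount (q : Fin m → ℝ) (hR : 0 < stepUpCount Δ q) :
    stepUpCount Δ q ≤ countLE q (Δ (stepUpCount Δ q)) :=
  (Nat.findGreatest_of_ne_zero (stepUpCount_eq_findGreatest Δ q).symm hR.ne').2

lemma le_stepUpCount {q : Fin m → ℝ} {r : ℕ} (hr : 0 < r) (hle : r ≤ countLE q (Δ r)) :
    r ≤ stepUpCount Δ q := by
  rw [stepUpCount_eq_findGreatest]
  exact Nat.le_findGreatest (hle.trans (countLE_le q _)) ⟨hr, hle⟩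

lemma countLE_stepUpCount (hΔ : Monotone Δ) (q : Fin m → ℝ) (hR : 0 < stepUpCount Δ q) :
    countLE q (Δ (stepUpCount Δ q)) = stepUpCount Δ q := by
  set R := stepUpCount Δ q
  refine le_antisymm (not_lt.mp fun hlt => ?_) (le_countLE_stepUpCount q hR)
  have hsucc : R + 1 ≤ countLE q (Δ (R + 1)) := hlt.trans_le (countLE_mono (hΔ R.le_succ))
  exact (le_stepUpCount R.succ_pos hsucc).not_gt R.lt_succ_self

lemma card_rejectSet (hΔ : Monotone Δ) (q : Fin m → ℝ) :
    (rejectSet Δ q).card = stepUpCount Δ q := by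
  unfold rejectSet
  split_ifs with hR
  · exact countLE_stepUpCount hΔ q hR
  · simp only [Finset.card_empty]; omega

noncomputable def leaveOneOutCount (Δ : ℕ → ℝ) (q : Fin m → ℝ) (i : Fin m) : ℕ :=
  stepUpCount Δ (Function.update q i 0)

variable {q : Fin m → ℝ} {i : Fin m}

lemma stepUpCount_le_leaveOneOutCount (hqi : 0 ≤ q i) :
    stepUpCount Δ q ≤ leaveOneOutCount Δ q i := by
  have hle : Function.update q i 0 ≤ q := fun j => by
    rcases eq_or_ne j i with rfl | hj
    · simpa using hqi
    · simp [hj]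
  rw [leaveOneOutCount, stepUpCount_eq_findGreatest, stepUpCount_eq_findGreatest]
  exact Nat.findGreatest_mono_left (fun r ⟨hr, hrc⟩ => ⟨hr, hrc.trans (countLE_anti hle _)⟩) m

lemma leaveOneOutCount_pos (hΔ1 : 0 ≤ Δ 1) : 0 < leaveOneOutCount Δ q i := by
  have hcount : 0 < countLE (Function.update q i 0) (Δ 1) :=
    Finset.card_pos.mpr ⟨i, by simpa using hΔ1⟩
  exact le_stepUpCount one_pos hcount

lemma stepUpCount_eq_leaveOneOutCount (hqi : 0 ≤ q i) (h : q i ≤ Δ (leaveOneOutCount Δ q i)) :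
    stepUpCount Δ q = leaveOneOutCount Δ q i := by
  refine le_antisymm (stepUpCount_le_leaveOneOutCount hqi) ?_
  set R := leaveOneOutCount Δ q i
  rcases Nat.eq_zero_or_pos R with hR | hR
  · exact hR.trans_le (Nat.zero_le _)
  have hcount : countLE (Function.update q i 0) (Δ R) = countLE q (Δ R) := by
    refine congrArg Finset.card (Finset.filter_congr fun j _ => ?_)
    rcases eq_or_ne j i with rfl | hj
    · simpa using ⟨fun _ => h, fun _ => hqi.trans h⟩
    · simp [hj]
  exact le_stepUpCount hR (hcount ▸ le_countLE_stepUpCount _ hR)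

lemma mem_rejectSet_iff (hΔ : Monotone Δ) (hΔ1 : 0 ≤ Δ 1) (hqi : 0 ≤ q i) :
    i ∈ rejectSet Δ q ↔ q i ≤ Δ (leaveOneOutCount Δ q i) := by
  unfold rejectSet
  constructor
  · intro hi
    split_ifs at hi with hR
    · exact (Finset.mem_filter.mp hi).2.trans (hΔ (stepUpCount_le_leaveOneOutCount hqi))
    · simp at hi
  · intro h
    rw [stepUpCount_eq_leaveOneOutCount hqi h, if_pos (leaveOneOutCount_pos hΔ1)]
    exact Finset.mem_filter.mpr ⟨Finset.mem_univ i, h⟩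

lemma fdp_eq_sum (hΔ : Monotone Δ) (hΔ1 : 0 ≤ Δ 1) (hq : 0 ≤ q) (H0 : Finset (Fin m)) :
    ((rejectSet Δ q ∩ H0).card : ℝ) / ((max (rejectSet Δ q).card 1 : ℕ) : ℝ) =
      ∑ i ∈ H0, if q i ≤ Δ (leaveOneOutCount Δ q i) then ((leaveOneOutCount Δ q i : ℕ) : ℝ)⁻¹
        else 0 := by
  rw [Finset.inter_comm, ← Finset.filter_mem_eq_inter, Finset.card_filter, Nat.cast_sum,
    Finset.sum_div]
  refine Finset.sum_congr rfl fun i _ => ?_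
  split_ifs with hi h h
  · have hR := leaveOneOutCount_pos (q := q) (i := i) hΔ1
    rw [card_rejectSet hΔ, stepUpCount_eq_leaveOneOutCount (hq i) h, max_eq_left hR,
      Nat.cast_one, one_div]
  · exact absurd ((mem_rejectSet_iff hΔ hΔ1 (hq i)).mp hi) h
  · exact absurd ((mem_rejectSet_iff hΔ hΔ1 (hq i)).mpr h) hi
  · simp

lemma measurable_countLE (c : ℝ) : Measurable fun q : Fin m → ℝ => countLE q c := by
  simp only [countLE, Finset.card_filter]
  exact Finset.measurable_sum _ fun j _ =>
    Measurable.ite (measurableSet_le (measurable_pi_apply j) measurable_const)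
      measurable_const measurable_const

lemma measurable_stepUpCount (Δ : ℕ → ℝ) : Measurable (stepUpCount (m := m) Δ) := by
  simp only [funext (stepUpCount_eq_findGreatest Δ)]
  exact measurable_findGreatest fun k _ =>
    (MeasurableSet.const _).inter (measurableSet_le measurable_const (measurable_countLE _))

end StepUp

lemma ProbabilityTheory.iIndepFun.indepFun_comp_update {Ω ι E β : Type*} [MeasurableSpace Ω]
    [Fintype ι] [DecidableEq ι] [MeasurableSpace E] [MeasurableSpace β] {P : Measure Ω}
    {f : ι → Ω → E} (hf : iIndepFun f P) (hmeas : ∀ i, Measurable (f i))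
    {G : (ι → E) → β} (hG : Measurable G) (i : ι) (a : E) :
    IndepFun (f i) (fun ω => G (Function.update (fun j => f j ω) i a)) P := by
  have hrest : ∀ ω, Function.updateFinset (fun _ => a) {i}ᶜ (fun j : ↥({i}ᶜ : Finset ι) => f j ω)
      = Function.update (fun j => f j ω) i a := fun ω => by
    ext j
    rcases eq_or_ne j i with rfl | hj
    · simp [Function.updateFinset]
    · simp [Function.updateFinset, hj]
  simp only [← hrest]
  exact (hf.indepFun_finset {i} {i}ᶜ disjoint_compl_right hmeas).comp
    (measurable_pi_apply (X := fun _ : ↥({i} : Finset ι) => E) ⟨i, Finset.mem_singleton_self i⟩)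
    (hG.comp measurable_updateFinset)

section LinearThreshold

variable {Ω : Type*} [MeasurableSpace Ω] {P : Measure Ω} {X : Ω → ℝ} {N : Ω → ℕ} {c : ℝ}
  {m : ℕ}

lemma integrable_ite_inv [IsFiniteMeasure P] (hX : Measurable X) (hN : Measurable N) :
    Integrable (fun ω => if X ω ≤ c * N ω then (N ω : ℝ)⁻¹ else 0) P := by
  have hNr : Measurable fun ω => (N ω : ℝ) := measurable_from_nat.comp hN
  refine Integrable.of_bound
    ((Measurable.ite (measurableSet_le hX (hNr.const_mul c)) hNr.inv measurable_const)
      |>.aestronglyMeasurable) 1 (Filter.Eventually.of_forall fun ω => ?_)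
  split_ifs
  · rcases (N ω).eq_zero_or_pos with h | h
    · simp [h]
    · rw [Real.norm_of_nonneg (by positivity)]
      exact inv_le_one_of_one_le₀ (by exact_mod_cast h)
  · simp

lemma integral_ite_inv_eq_sum [IsFiniteMeasure P] (hX : Measurable X) (hN : Measurable N)
    (hXN : IndepFun X N P) (hNm : ∀ ω, N ω ∈ Finset.Icc 1 m) :
    ∫ ω, (if X ω ≤ c * N ω then (N ω : ℝ)⁻¹ else 0) ∂P =
      ∑ r ∈ Finset.Icc 1 m, P.real {ω | X ω ≤ c * r} * P.real {ω | N ω = r} / r := by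
  have hS (r : ℕ) : MeasurableSet (X ⁻¹' Set.Iic (c * r) ∩ N ⁻¹' {r}) :=
    (hX measurableSet_Iic).inter (hN (measurableSet_singleton r))
  have hsum : (fun ω => if X ω ≤ c * N ω then (N ω : ℝ)⁻¹ else 0) = fun ω =>
      ∑ r ∈ Finset.Icc 1 m, (X ⁻¹' Set.Iic (c * r) ∩ N ⁻¹' {r}).indicator (fun _ => (r : ℝ)⁻¹) ω
      := by
    ext ω
    rw [Finset.sum_eq_single_of_mem (N ω) (hNm ω) fun r _ hr =>
      Set.indicator_of_notMem (fun h => hr h.2.symm) _]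
    by_cases h : X ω ≤ c * N ω <;> simp [h]
  rw [hsum, integral_finsetSum _ fun r _ => (integrable_const _).indicator (hS r)]
  refine Finset.sum_congr rfl fun r _ => ?_
  rw [integral_indicator_const _ (hS r), smul_eq_mul, measureReal_def, measureReal_def,
    measureReal_def, hXN.measure_inter_preimage_eq_mul _ _ measurableSet_Iic
      (measurableSet_singleton r), ENNReal.toReal_mul, div_eq_mul_inv]
  rfl

lemma sum_mul_measureReal_div_eq [IsProbabilityMeasure P] (hN : Measurable N)
    (hNm : ∀ ω, N ω ∈ Finset.Icc 1 m) :
    ∑ r ∈ Finset.Icc 1 m, c * r * P.real {ω | N ω = r} / r = c := by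
  have hterm : ∀ r ∈ Finset.Icc 1 m,
      c * r * P.real {ω | N ω = r} / r = c * P.real (N ⁻¹' {r}) := fun r hr => by
    have : (r : ℝ) ≠ 0 := Nat.cast_ne_zero.mpr (Nat.one_le_iff_ne_zero.mp (Finset.mem_Icc.mp hr).1)
    field_simp
    rfl
  rw [Finset.sum_congr rfl hterm, ← Finset.mul_sum,
    sum_measureReal_preimage_singleton _ fun r _ => hN (measurableSet_singleton r),
    Set.preimage_eq_univ_iff.mpr fun _ ⟨ω, hω⟩ => hω ▸ hNm ω, probReal_univ, mul_one]

lemma integral_ite_inv_le [IsProbabilityMeasure P] (hX : Measurable X) (hN : Measurable N)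
    (hXN : IndepFun X N P) (hNm : ∀ ω, N ω ∈ Finset.Icc 1 m) (hc : 0 ≤ c)
    (hsuper : ∀ r ∈ Finset.Icc 1 m, P {ω | X ω ≤ c * r} ≤ ENNReal.ofReal (c * r)) :
    ∫ ω, (if X ω ≤ c * N ω then (N ω : ℝ)⁻¹ else 0) ∂P ≤ c := by
  rw [integral_ite_inv_eq_sum hX hN hXN hNm]
  conv_rhs => rw [← sum_mul_measureReal_div_eq (P := P) (c := c) hN hNm]
  gcongr with r hr
  exact ENNReal.toReal_le_of_le_ofReal (by positivity) (hsuper r hr)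

lemma integral_ite_inv_eq [IsProbabilityMeasure P] (hX : Measurable X) (hN : Measurable N)
    (hXN : IndepFun X N P) (hNm : ∀ ω, N ω ∈ Finset.Icc 1 m) (hc : 0 ≤ c)
    (hunif : ∀ r ∈ Finset.Icc 1 m, P {ω | X ω ≤ c * r} = ENNReal.ofReal (c * r)) :
    ∫ ω, (if X ω ≤ c * N ω then (N ω : ℝ)⁻¹ else 0) ∂P = c := by
  rw [integral_ite_inv_eq_sum hX hN hXN hNm]
  conv_rhs => rw [← sum_mul_measureReal_div_eq (P := P) (c := c) hN hNm]
  refine Finset.sum_congr rfl fun r hr => ?_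
  rw [measureReal_def, hunif r hr, ENNReal.toReal_ofReal (by positivity)]

end LinearThreshold

theorem bh_fdr_independent_general
    {Ω : Type*} [MeasurableSpace Ω] (P : Measure Ω) [IsProbabilityMeasure P]
    {m : ℕ} (α : ℝ) (hα : α ∈ Set.Ioc (0 : ℝ) 1)
    (H0 : Finset (Fin m))
    (p : Fin m → Ω → ℝ) (hmeas : ∀ i, Measurable (p i))
    (hval : ∀ i ω, p i ω ∈ Set.Icc (0 : ℝ) 1)
    (hindep : iIndepFun p P)
    (hsuper : ∀ i ∈ H0, ∀ t ∈ Set.Icc (0 : ℝ) 1, P {ω | p i ω ≤ t} ≤ ENNReal.ofReal t) :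
    (∫ ω, ((rejectSet (fun r => α * r / m) (fun i => p i ω) ∩ H0).card : ℝ) /
          ((max (rejectSet (fun r => α * r / m) (fun i => p i ω)).card 1 : ℕ) : ℝ) ∂P
        ≤ α * H0.card / m) ∧
    ((∀ i ∈ H0, ∀ t ∈ Set.Icc (0 : ℝ) 1, P {ω | p i ω ≤ t} = ENNReal.ofReal t) →
      ∫ ω, ((rejectSet (fun r => α * r / m) (fun i => p i ω) ∩ H0).card : ℝ) /
          ((max (rejectSet (fun r => α * r / m) (fun i => p i ω)).card 1 : ℕ) : ℝ) ∂P
        = α * H0.card / m) := by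
  obtain ⟨hα0, hα1⟩ := hα
  set c : ℝ := α / m
  have hc : 0 ≤ c := by positivity
  have hthreshold (r : ℕ) : α * r / m = c * r := mul_div_right_comm α r m
  have hc_mem : ∀ r ∈ Finset.Icc 1 m, c * r ∈ Set.Icc (0 : ℝ) 1 := fun r hr => by
    obtain ⟨hr1, hrm⟩ := Finset.mem_Icc.mp hr
    refine ⟨by positivity, ?_⟩
    rw [← hthreshold, div_le_one (by exact_mod_cast hr1.trans hrm)]
    exact (mul_le_mul hα1 (by exact_mod_cast hrm) (by positivity) zero_le_one).trans_eq (one_mul _)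
  set R : Fin m → Ω → ℕ := fun i ω => leaveOneOutCount (fun r : ℕ => c * r) (fun j => p j ω) i
  have hR_meas (i : Fin m) : Measurable (R i) :=
    (measurable_stepUpCount _).comp (measurable_update_left.comp (measurable_pi_lambda _ hmeas))
  have hR_indep (i : Fin m) : IndepFun (p i) (R i) P :=
    hindep.indepFun_comp_update hmeas (measurable_stepUpCount _) i 0
  have hR_mem (i : Fin m) (ω : Ω) : R i ω ∈ Finset.Icc 1 m :=
    Finset.mem_Icc.mpr ⟨leaveOneOutCount_pos (by positivity), stepUpCount_le _ _⟩
  have hmono : Monotone fun r : ℕ => c * r := fun a b hab => by dsimp only; gcongr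
  have hfdp (ω : Ω) := fdp_eq_sum (q := fun j => p j ω) hmono (by positivity)
    (fun j => (hval j ω).1) H0
  simp only [hthreshold, hfdp]
  rw [integral_finsetSum _ fun i _ => integrable_ite_inv (hmeas i) (hR_meas i)]
  have hsum : ∑ _i ∈ H0, c = c * H0.card := by rw [Finset.sum_const, nsmul_eq_mul, mul_comm]
  refine ⟨?_, fun hunif => ?_⟩
  · exact (Finset.sum_le_sum fun i hi => integral_ite_inv_le (hmeas i) (hR_meas i) (hR_indep i)
      (hR_mem i) hc fun r hr => hsuper i hi _ (hc_mem r hr)).trans_eq hsum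
  · rw [← hsum]
    exact Finset.sum_congr rfl fun i hi => integral_ite_inv_eq (hmeas i) (hR_meas i)
      (hR_indep i) (hR_mem i) hc fun r hr => hunif i hi _ (hc_mem r hr)

/-- FDR control of the Benjamini–Hochberg procedure under independence:
for independent p-values with superuniform null p-values, the BH(α) procedure (the step-up
procedure with thresholds `Δ(r) = αr/m`) has FDR at most `α·|H₀|/m`; if moreover the null
p-values are exactly uniform, its FDR is exactly `α·|H₀|/m`. -/
theorem bh_fdr_independent
    {Ω : Type*} [MeasurableSpace Ω] (P : Measure Ω) [IsProbabilityMeasure P]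
    {m : ℕ} (hm : 0 < m) (α : ℝ) (hα : α ∈ Set.Ioc (0 : ℝ) 1)
    (H0 : Finset (Fin m))
    (p : Fin m → Ω → ℝ) (hmeas : ∀ i, Measurable (p i))
    (hval : ∀ i ω, p i ω ∈ Set.Icc (0 : ℝ) 1)
    (hindep : iIndepFun p P)
    (hsuper : ∀ i ∈ H0, ∀ t ∈ Set.Icc (0 : ℝ) 1, P {ω | p i ω ≤ t} ≤ ENNReal.ofReal t) :
    (∫ ω, ((rejectSet (fun r => α * r / m) (fun i => p i ω) ∩ H0).card : ℝ) /
          ((max (rejectSet (fun r => α * r / m) (fun i => p i ω)).card 1 : ℕ) : ℝ) ∂P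
        ≤ α * H0.card / m) ∧
    ((∀ i ∈ H0, ∀ t ∈ Set.Icc (0 : ℝ) 1, P {ω | p i ω ≤ t} = ENNReal.ofReal t) →
      ∫ ω, ((rejectSet (fun r => α * r / m) (fun i => p i ω) ∩ H0).card : ℝ) /
          ((max (rejectSet (fun r => α * r / m) (fun i => p i ω)).card 1 : ℕ) : ℝ) ∂P
        = α * H0.card / m) :=
  bh_fdr_independent_general P α hα H0 p hmeas hval hindep hsuper
end

section
/- Let m be a positive integer, α ∈ (0,1], p a superuniform random variable in [0,1] (ℙ(p ≤ t) ≤ t for all t ∈ [0,1]), and R̂ a random variable taking values in {1,...,m}, on a common probability space. Assume ℙ(p ≤ αr/m) > 0 for all r ∈ {1,...,m}, and assume the conditional monotonicity property: for every r ∈ {1,...,m−1}, ℙ(R̂ ≤ r | p ≤ αr/m) ≤ ℙ(R̂ ≤ r | p ≤ α(r+1)/m). Then ∑_{r=1}^m ℙ(R̂ = r | p ≤ αr/m) ≤ 1. -/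
open MeasureTheory ProbabilityTheory Classical

/-- the telescoping inequality under conditional positive regression
dependence: if `p` is superuniform on `[0,1]`, `R̂` takes values in `{1,…,m}`, every event
`{p ≤ αr/m}` has positive probability, and `ℙ(R̂ ≤ r | p ≤ αr/m) ≤ ℙ(R̂ ≤ r | p ≤ α(r+1)/m)`
for all `r ∈ {1,…,m−1}`, then `∑_{r=1}^m ℙ(R̂ = r | p ≤ αr/m) ≤ 1`. -/
theorem telescoping_inequality
    {Ω : Type*} [MeasurableSpace Ω] (P : Measure Ω) [IsProbabilityMeasure P]
    {m : ℕ} (hm : 0 < m) (α : ℝ) (hα : α ∈ Set.Ioc (0 : ℝ) 1)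
    (p : Ω → ℝ) (hp : Measurable p) (hpval : ∀ ω, p ω ∈ Set.Icc (0 : ℝ) 1)
    (hsuper : ∀ t ∈ Set.Icc (0 : ℝ) 1, P {ω | p ω ≤ t} ≤ ENNReal.ofReal t)
    (Rhat : Ω → ℕ) (hR : Measurable Rhat) (hRval : ∀ ω, Rhat ω ∈ Set.Icc 1 m)
    (hpos : ∀ r : ℕ, 1 ≤ r → r ≤ m → 0 < P {ω | p ω ≤ α * (r : ℝ) / m})
    (hmono : ∀ r : ℕ, 1 ≤ r → r < m →
      (P[|{ω | p ω ≤ α * (r : ℝ) / m}]) {ω | Rhat ω ≤ r}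
        ≤ (P[|{ω | p ω ≤ α * ((r : ℝ) + 1) / m}]) {ω | Rhat ω ≤ r}) :
    ∑ r ∈ Finset.Icc 1 m, (P[|{ω | p ω ≤ α * (r : ℝ) / m}]) {ω | Rhat ω = r} ≤ 1 := by
  have hmeasR : ∀ k : ℕ, MeasurableSet {ω | Rhat ω ≤ k} := fun k =>
    hR measurableSet_Iic
  have hmeasE : ∀ k : ℕ, MeasurableSet {ω | Rhat ω = k} := fun k =>
    hR (measurableSet_singleton k)
  have key : ∀ k, 1 ≤ k → k ≤ m →
      ∑ r ∈ Finset.Icc 1 k, (P[|{ω | p ω ≤ α * (r : ℝ) / m}]) {ω | Rhat ω = r}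
        ≤ (P[|{ω | p ω ≤ α * (k : ℝ) / m}]) {ω | Rhat ω ≤ k} := by
    intro k
    induction k with
    | zero => intro h; omega
    | succ n ih =>
      intro _ hle
      rcases Nat.eq_zero_or_pos n with hn | hn
      · subst hn
        simp only [Finset.Icc_self, Finset.sum_singleton]
        apply measure_mono
        intro ω hω
        simp only [Set.mem_setOf_eq] at hω ⊢
        omega
      · have hsum := ih hn (le_of_lt (Nat.lt_of_succ_le hle))
        rw [Finset.sum_Icc_succ_top (by omega : 1 ≤ n + 1)]
        have hmono' := hmono n hn (Nat.lt_of_succ_le hle)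
        have hcast : α * ((n : ℝ) + 1) / m = α * ((n + 1 : ℕ) : ℝ) / m := by push_cast; ring
        rw [hcast] at hmono'
        have hunion : {ω | Rhat ω ≤ n + 1} = {ω | Rhat ω ≤ n} ∪ {ω | Rhat ω = n + 1} := by
          ext ω; simp only [Set.mem_setOf_eq, Set.mem_union]; omega
        have hdisj : Disjoint {ω | Rhat ω ≤ n} {ω | Rhat ω = n + 1} := by
          rw [Set.disjoint_left]
          intro ω h1 h2
          simp only [Set.mem_setOf_eq] at h1 h2
          omega
        have hadd : (P[|{ω | p ω ≤ α * ((n + 1 : ℕ) : ℝ) / m}]) {ω | Rhat ω ≤ n + 1}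
            = (P[|{ω | p ω ≤ α * ((n + 1 : ℕ) : ℝ) / m}]) {ω | Rhat ω ≤ n}
              + (P[|{ω | p ω ≤ α * ((n + 1 : ℕ) : ℝ) / m}]) {ω | Rhat ω = n + 1} := by
          rw [hunion, measure_union hdisj (hmeasE (n + 1))]
        rw [hadd]
        exact add_le_add (le_trans hsum hmono') le_rfl
  have hkey := key m (by omega) le_rfl
  refine le_trans hkey ?_
  have hne : P {ω | p ω ≤ α * (m : ℝ) / m} ≠ 0 := (hpos m (by omega) le_rfl).ne'
  have : IsProbabilityMeasure (P[|{ω | p ω ≤ α * (m : ℝ) / m}]) :=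
    cond_isProbabilityMeasure hne
  exact prob_le_one
end

section
/- Let m be a positive integer, α ∈ (0,1], p a superuniform random variable in [0,1] (ℙ(p ≤ t) ≤ t for all t ∈ [0,1]), and R̂ a random variable taking values in {1,...,m}, on a common probability space. Assume ℙ(p ≤ αr/m) > 0 for all r ∈ {1,...,m}, and assume that for every r ∈ {1,...,m−1}, ℙ(R̂ ≤ r | p ≤ αr/m) ≤ ℙ(R̂ ≤ r | p ≤ α(r+1)/m). Then E[ 1{p ≤ αR̂/m} / R̂ ] ≤ α/m. -/
open MeasureTheory ProbabilityTheory Classical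

/-- the core bound for dBH₁(α) under conditional positive regression
dependence: if `p` is superuniform on `[0,1]`, `R̂` takes values in `{1,…,m}`, every event
`{p ≤ αr/m}` has positive probability, and `ℙ(R̂ ≤ r | p ≤ αr/m) ≤ ℙ(R̂ ≤ r | p ≤ α(r+1)/m)`
for all `r ∈ {1,…,m−1}`, then `E[1{p ≤ αR̂/m} / R̂] ≤ α/m`. -/
theorem dbh_core_bound
    {Ω : Type*} [MeasurableSpace Ω] (P : Measure Ω) [IsProbabilityMeasure P]
    {m : ℕ} (hm : 0 < m) (α : ℝ) (hα : α ∈ Set.Ioc (0 : ℝ) 1)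
    (p : Ω → ℝ) (hp : Measurable p) (hpval : ∀ ω, p ω ∈ Set.Icc (0 : ℝ) 1)
    (hsuper : ∀ t ∈ Set.Icc (0 : ℝ) 1, P {ω | p ω ≤ t} ≤ ENNReal.ofReal t)
    (Rhat : Ω → ℕ) (hR : Measurable Rhat) (hRval : ∀ ω, Rhat ω ∈ Set.Icc 1 m)
    (hpos : ∀ r : ℕ, 1 ≤ r → r ≤ m → 0 < P {ω | p ω ≤ α * (r : ℝ) / m})
    (hmono : ∀ r : ℕ, 1 ≤ r → r < m →
      (P[|{ω | p ω ≤ α * (r : ℝ) / m}]) {ω | Rhat ω ≤ r}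
        ≤ (P[|{ω | p ω ≤ α * ((r : ℝ) + 1) / m}]) {ω | Rhat ω ≤ r}) :
    ∫ ω, (if p ω ≤ α * (Rhat ω : ℝ) / m then (1 : ℝ) / (Rhat ω : ℝ) else 0) ∂P ≤ α / m := by
  classical
  have hm' : (0:ℝ) < m := by exact_mod_cast hm
  obtain ⟨hα0, hα1⟩ := hα
  set A : ℕ → Set Ω := fun r => {ω | p ω ≤ α * (r : ℝ) / m} with hAdef
  have hAmeas : ∀ r, MeasurableSet (A r) := fun r => hp measurableSet_Iic
  have hAfin : ∀ r, P (A r) ≠ ⊤ := fun r => (measure_lt_top P _).ne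
  set B : ℕ → Set Ω := fun s => {ω | Rhat ω ≤ s} with hBdef
  have hBmeas : ∀ s, MeasurableSet (B s) := fun s => hR measurableSet_Iic
  set E : ℕ → Set Ω := fun r => A r ∩ {ω | Rhat ω = r} with hEdef
  have hEmeas : ∀ r, MeasurableSet (E r) := fun r =>
    (hAmeas r).inter (hR (measurableSet_singleton r))
  have hEmem : ∀ (ω : Ω) (r : ℕ), ω ∈ E r ↔ p ω ≤ α * (r : ℝ) / m ∧ Rhat ω = r :=
    fun ω r => Iff.rfl
  set u : ℕ → ℝ := fun r => (P (A r)).toReal with hudef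
  set v : ℕ → ℕ → ℝ := fun r s => (P (A r ∩ B s)).toReal with hvdef
  set G : ℕ → ℝ := fun r => if r = 0 then 0 else v r r / u r with hGdef
  have hupos : ∀ r, 1 ≤ r → r ≤ m → 0 < u r := by
    intro r h1 h2
    exact ENNReal.toReal_pos (hpos r h1 h2).ne' (hAfin r)
  have hule : ∀ r : ℕ, r ≤ m → u r ≤ α * r / m := by
    intro r hr
    have hr' : (r:ℝ) ≤ m := by exact_mod_cast hr
    have ht0 : 0 ≤ α * r / m := by positivity
    have ht1 : α * r / m ≤ 1 := by
      rw [div_le_one hm']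
      calc α * r ≤ 1 * (m:ℝ) := by
            apply mul_le_mul hα1 hr' (by positivity) zero_le_one
        _ = m := one_mul _
    exact ENNReal.toReal_le_of_le_ofReal ht0 (hsuper _ ⟨ht0, ht1⟩)
  have hv0 : ∀ r s, 0 ≤ v r s := fun r s => ENNReal.toReal_nonneg
  have hvle : ∀ r s, v r s ≤ u r := by
    intro r s
    exact ENNReal.toReal_mono (hAfin r) (measure_mono Set.inter_subset_left)
  have hvmono : ∀ r a b, a ≤ b → v r a ≤ v r b := by
    intro r a b hab
    refine ENNReal.toReal_mono ((measure_lt_top P _).ne) (measure_mono ?_)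
    exact Set.inter_subset_inter_right _ (fun ω hω => le_trans hω (by exact_mod_cast hab))
  -- the conditional monotonicity in real form
  have hcond : ∀ s : ℕ, 1 ≤ s → s < m → v s s / u s ≤ v (s+1) s / u (s+1) := by
    intro s h1 h2
    have hcast : {ω | p ω ≤ α * ((s:ℝ) + 1) / m} = A (s+1) := by
      simp only [hAdef]
      norm_cast
    have h := hmono s h1 h2
    rw [hcast] at h
    rw [ProbabilityTheory.cond_apply (hAmeas s), ProbabilityTheory.cond_apply (hAmeas (s+1))] at h
    have hne1 : (P (A (s+1)))⁻¹ * P (A (s+1) ∩ B s) ≠ ⊤ := by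
      apply ENNReal.mul_ne_top
      · exact ENNReal.inv_ne_top.mpr (hpos (s+1) (by omega) (by omega)).ne'
      · exact (measure_lt_top P _).ne
    have h' := ENNReal.toReal_mono hne1 h
    rw [ENNReal.toReal_mul, ENNReal.toReal_mul, ENNReal.toReal_inv, ENNReal.toReal_inv] at h'
    simpa [hudef, hvdef, inv_mul_eq_div] using h'
  -- splitting identity
  have hwsplit : ∀ r : ℕ, 1 ≤ r → v r r = v r (r-1) + (P (E r)).toReal := by
    intro r hr
    have hset : A r ∩ B r = (A r ∩ B (r-1)) ∪ E r := by
      rw [hEdef]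
      rw [← Set.inter_union_distrib_left]
      congr 1
      ext ω
      simp only [hBdef, Set.mem_union, Set.mem_setOf_eq]
      omega
    have hdisj : Disjoint (A r ∩ B (r-1)) (E r) := by
      rw [Set.disjoint_left]
      rintro ω ⟨-, h1⟩ ⟨-, h2⟩
      simp only [hBdef, Set.mem_setOf_eq] at h1 h2
      omega
    have : P (A r ∩ B r) = P (A r ∩ B (r-1)) + P (E r) := by
      rw [hset, measure_union hdisj (hEmeas r)]
    simp only [hvdef, this]
    rw [ENNReal.toReal_add ((measure_lt_top P _).ne) ((measure_lt_top P _).ne)]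
  -- per-term bound
  have hterm : ∀ r ∈ Finset.Icc 1 m,
      (P (E r)).toReal * ((1:ℝ) / r) ≤ (α / m) * (G r - G (r-1)) := by
    intro r hr
    rw [Finset.mem_Icc] at hr
    obtain ⟨hr1, hrm⟩ := hr
    obtain ⟨s, rfl⟩ := Nat.exists_eq_succ_of_ne_zero (by omega : r ≠ 0)
    have hu1 : 0 < u (s+1) := hupos _ (by omega) hrm
    have hGs1 : G (s+1) = v (s+1) (s+1) / u (s+1) := by simp [hGdef]
    have hGlow : u (s+1) * G s ≤ v (s+1) s := by
      rcases Nat.eq_zero_or_pos s with h0 | hs1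
      · subst h0
        simp only [hGdef, if_pos rfl, mul_zero]
        exact hv0 _ _
      · have hGseq : G s = v s s / u s := by
          simp [hGdef, Nat.pos_iff_ne_zero.mp hs1]
        have := hcond s hs1 (by omega)
        rw [← hGseq] at this
        rw [le_div_iff₀ hu1] at this
        linarith [this]
    have hw : (P (E (s+1))).toReal = v (s+1) (s+1) - v (s+1) s := by
      have := hwsplit (s+1) (by omega)
      simp only [Nat.add_sub_cancel] at this
      linarith
    have hwle : (P (E (s+1))).toReal ≤ u (s+1) * (G (s+1) - G s) := by
      rw [hw, hGs1, mul_sub, mul_div_cancel₀ _ hu1.ne']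
      linarith [hGlow]
    have hΔG : 0 ≤ G (s+1) - G s := by
      have h0 : (0:ℝ) ≤ (P (E (s+1))).toReal := ENNReal.toReal_nonneg
      nlinarith [hwle, hu1]
    have hc : (1:ℝ) ≤ ((s+1 : ℕ):ℝ) := by exact_mod_cast Nat.one_le_iff_ne_zero.mpr (by omega)
    have hc0 : (0:ℝ) < ((s+1 : ℕ):ℝ) := by linarith
    have hudiv : u (s+1) / ((s+1 : ℕ):ℝ) ≤ α / m := by
      rw [div_le_div_iff₀ hc0 hm']
      have h := hule (s+1) hrm
      calc u (s+1) * m ≤ (α * ((s+1:ℕ):ℝ) / m) * m :=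
            mul_le_mul_of_nonneg_right h hm'.le
        _ = α * ((s+1:ℕ):ℝ) := div_mul_cancel₀ _ hm'.ne'
    have h0w : (0:ℝ) ≤ (P (E (s+1))).toReal := ENNReal.toReal_nonneg
    calc (P (E (s+1))).toReal * ((1:ℝ) / ((s+1:ℕ):ℝ))
        ≤ (u (s+1) * (G (s+1) - G s)) * ((1:ℝ) / ((s+1:ℕ):ℝ)) :=
          mul_le_mul_of_nonneg_right hwle (le_of_lt (by positivity))
      _ = (u (s+1) / ((s+1:ℕ):ℝ)) * (G (s+1) - G s) := by ring
      _ ≤ (α / m) * (G (s+1) - G s) := by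
          apply mul_le_mul_of_nonneg_right hudiv hΔG
      _ = (α / m) * (G (s+1) - G ((s+1) - 1)) := by norm_num
  -- rewrite the integral as a finite sum
  have hInt : (fun ω => if p ω ≤ α * (Rhat ω : ℝ) / m then (1 : ℝ) / (Rhat ω : ℝ) else 0)
      = fun ω => ∑ r ∈ Finset.Icc 1 m, (E r).indicator (fun _ => (1:ℝ)/(r:ℝ)) ω := by
    funext ω
    obtain ⟨h1, h2⟩ := hRval ω
    rw [Finset.sum_eq_single (Rhat ω)]
    · by_cases h : p ω ≤ α * (Rhat ω : ℝ) / m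
      · rw [if_pos h, Set.indicator_of_mem ((hEmem ω (Rhat ω)).mpr ⟨h, rfl⟩)]
      · rw [if_neg h, Set.indicator_of_notMem
          (fun hc => h ((hEmem ω (Rhat ω)).mp hc).1)]
    · intro b _ hb
      exact Set.indicator_of_notMem (fun hc => hb ((hEmem ω b).mp hc).2.symm) _
    · intro hc
      exact absurd (Finset.mem_Icc.mpr ⟨h1, h2⟩) hc
  rw [hInt, integral_finset_sum _ (fun (r : ℕ) _ => (integrable_const ((1:ℝ)/(r:ℝ))).indicator (hEmeas r))]
  simp only [integral_indicator_const _ (hEmeas _), smul_eq_mul]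
  -- telescoping sum
  have htel : ∀ n : ℕ, ∑ r ∈ Finset.Icc 1 n, (G r - G (r-1)) = G n := by
    intro n
    induction n with
    | zero => simp [hGdef]
    | succ k ih =>
      rw [Finset.sum_Icc_succ_top (by omega : 1 ≤ k + 1), ih]
      simp only [Nat.add_sub_cancel]
      ring
  have hGm : G m ≤ 1 := by
    have : G m = v m m / u m := by simp [hGdef, Nat.pos_iff_ne_zero.mp hm]
    rw [this, div_le_one (hupos m hm le_rfl)]
    exact hvle m m
  calc ∑ r ∈ Finset.Icc 1 m, (P (E r)).toReal * ((1:ℝ)/(r:ℝ))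
      ≤ ∑ r ∈ Finset.Icc 1 m, (α / m) * (G r - G (r-1)) := Finset.sum_le_sum hterm
    _ = (α / m) * G m := by rw [← Finset.mul_sum, htel m]
    _ ≤ α / m := by
        have h0 : 0 ≤ α / m := by positivity
        nlinarith
end

section
/- Let m be a positive integer, α ∈ (0,1], and let ν be a probability measure on {1,...,m}. Define the shape function β(r) = ∑_{i=1}^r i·ν({i}) for r ∈ {1,...,m}. Let p be a superuniform random variable in [0,1] (ℙ(p ≤ t) ≤ t for all t ∈ [0,1]) and let R be any random variable taking values in {1,...,m} on the same probability space (with arbitrary joint dependence between p and R). Then E[ 1{p ≤ αβ(R)/m} / R ] ≤ α/m. -/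
/-!
Write `1/R = ∑_{k=R}^m (1/k - 1/(k+1)) + 1/(m+1)`. On the event `p ≤ αβ(R)/m`, every term with
`k ≥ R` is dominated by the indicator of `p ≤ αβ(k)/m`, since `β` is nondecreasing; this removes
`R` from the bound, whatever its dependence on `p`. Superuniformity bounds the expectation of each
indicator by `αβ(k)/m`, and summation by parts turns the resulting sum into
`∑_k (αβ(k) - αβ(k-1))/(m k) = ∑_k αν(k)/m = α/m`.
-/

open MeasureTheory Finset

theorem one_div_eq_sum_Icc_add {r m : ℕ} (hr : r ≤ m) :
    1 / (r : ℝ) = ∑ k ∈ Icc r m, (1 / (k : ℝ) - 1 / (k + 1 : ℝ)) + 1 / (m + 1 : ℝ) := by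
  have := sum_Icc_sub hr (fun k : ℕ => - (1 / (k : ℝ)))
  push_cast at this
  simp only [sub_neg_eq_add, neg_add_eq_sub] at this
  rw [this]; ring

theorem one_div_sub_one_div_succ_nonneg {k : ℕ} (hk : 1 ≤ k) :
    0 ≤ 1 / (k : ℝ) - 1 / (k + 1 : ℝ) :=
  sub_nonneg.2 <| one_div_le_one_div_of_le (by exact_mod_cast hk) (by linarith)

theorem ite_one_div_le_sum_indicator {t : ℕ → ℝ} (ht : Monotone t) (x : ℝ) {r m : ℕ}
    (hr : r ∈ Icc 1 m) :
    (if x ≤ t r then 1 / (r : ℝ) else 0) ≤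
      ∑ k ∈ Icc 1 m, (1 / (k : ℝ) - 1 / (k + 1 : ℝ)) * (Set.Iic (t k)).indicator 1 x
        + 1 / (m + 1 : ℝ) * (Set.Iic (t m)).indicator 1 x := by
  obtain ⟨hr1, hrm⟩ := mem_Icc.1 hr
  have hw : ∀ k ∈ Icc 1 m, 0 ≤ (1 / (k : ℝ) - 1 / (k + 1 : ℝ)) * (Set.Iic (t k)).indicator 1 x :=
    fun k hk => mul_nonneg (one_div_sub_one_div_succ_nonneg (mem_Icc.1 hk).1)
      (Set.indicator_nonneg (fun _ _ => zero_le_one) _)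
  split_ifs with hx
  · have hind : ∀ k, r ≤ k → (Set.Iic (t k)).indicator (1 : ℝ → ℝ) x = 1 :=
      fun k hk => Set.indicator_of_mem (Set.mem_Iic.2 (hx.trans (ht hk))) _
    rw [one_div_eq_sum_Icc_add hrm, hind m hrm, mul_one]
    gcongr
    calc ∑ k ∈ Icc r m, (1 / (k : ℝ) - 1 / (k + 1 : ℝ))
        = ∑ k ∈ Icc r m, (1 / (k : ℝ) - 1 / (k + 1 : ℝ)) * (Set.Iic (t k)).indicator 1 x :=
          sum_congr rfl fun k hk => by rw [hind k (mem_Icc.1 hk).1, mul_one]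
      _ ≤ _ := sum_le_sum_of_subset_of_nonneg (Icc_subset_Icc_left hr1) fun k hk _ => hw k hk
  · exact add_nonneg (sum_nonneg hw)
      (mul_nonneg (by positivity) (Set.indicator_nonneg (fun _ _ => zero_le_one) _))

theorem integral_ite_one_div_le {Ω : Type*} [MeasurableSpace Ω] {P : Measure Ω}
    [IsFiniteMeasure P] {p : Ω → ℝ} (hp : Measurable p) {t : ℕ → ℝ} (ht : Monotone t)
    {m : ℕ} (hsuper : ∀ k ≤ m, P.real {ω | p ω ≤ t k} ≤ t k)
    {R : Ω → ℕ} (hR : ∀ ω, R ω ∈ Icc 1 m) :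
    ∫ ω, (if p ω ≤ t (R ω) then 1 / (R ω : ℝ) else 0) ∂P ≤
      ∑ k ∈ Icc 1 m, (1 / (k : ℝ) - 1 / (k + 1 : ℝ)) * t k + 1 / (m + 1 : ℝ) * t m := by
  have h_integral (c : ℝ) : ∫ ω, (Set.Iic c).indicator 1 (p ω) ∂P = P.real {ω | p ω ≤ c} := by
    simp_rw [← Set.indicator_comp_right]
    exact integral_indicator_one (hp measurableSet_Iic)
  have h_integrable (a c : ℝ) :
      Integrable (fun ω => a * (Set.Iic c).indicator (1 : ℝ → ℝ) (p ω)) P := by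
    simp_rw [← Set.indicator_comp_right]
    exact ((integrable_const 1).indicator (hp measurableSet_Iic)).const_mul a
  calc _ ≤ ∫ ω, (∑ k ∈ Icc 1 m, (1 / (k : ℝ) - 1 / (k + 1 : ℝ)) * (Set.Iic (t k)).indicator 1 (p ω)
          + 1 / (m + 1 : ℝ) * (Set.Iic (t m)).indicator 1 (p ω)) ∂P := by
        refine integral_mono_of_nonneg (ae_of_all _ fun ω => ?_) ?_
          (ae_of_all _ fun ω => ite_one_div_le_sum_indicator ht (p ω) (hR ω))
        · dsimp only
          split_ifs <;> positivity
        · exact (integrable_finsetSum _ fun k _ => h_integrable _ _).add (h_integrable _ _)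
    _ = ∑ k ∈ Icc 1 m, (1 / (k : ℝ) - 1 / (k + 1 : ℝ)) * P.real {ω | p ω ≤ t k}
          + 1 / (m + 1 : ℝ) * P.real {ω | p ω ≤ t m} := by
        rw [integral_add (integrable_finsetSum _ fun k _ => h_integrable _ _) (h_integrable _ _),
          integral_finsetSum _ fun k _ => h_integrable _ _]
        simp only [integral_const_mul, h_integral]
    _ ≤ _ := by
        gcongr with k hk
        · exact one_div_sub_one_div_succ_nonneg (mem_Icc.1 hk).1
        · exact hsuper k (mem_Icc.1 hk).2
        · exact hsuper m le_rfl

theorem sum_Icc_one_div_sub_mul_add_eq (t : ℕ → ℝ) (ht0 : t 0 = 0) (m : ℕ) :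
    ∑ k ∈ Icc 1 m, (1 / (k : ℝ) - 1 / (k + 1 : ℝ)) * t k + 1 / (m + 1 : ℝ) * t m
      = ∑ k ∈ Icc 1 m, (t k - t (k - 1)) / k := by
  induction m with
  | zero => simp [ht0]
  | succ m ih =>
    rw [sum_Icc_succ_top (by omega), sum_Icc_succ_top (by omega), ← ih, Nat.add_sub_cancel]
    push_cast
    field_simp
    ring

def shapeFunction (ν : ℕ → ℝ) (r : ℕ) : ℝ := ∑ i ∈ Icc 1 r, (i : ℝ) * ν i

section ShapeFunction

variable {ν : ℕ → ℝ}

theorem shapeFunction_zero : shapeFunction ν 0 = 0 := by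
  simp [shapeFunction]

theorem shapeFunction_succ (r : ℕ) :
    shapeFunction ν (r + 1) = shapeFunction ν r + (r + 1 : ℕ) * ν (r + 1) :=
  sum_Icc_succ_top (Nat.le_add_left 1 r) _

theorem shapeFunction_sub_pred {r : ℕ} (hr : 1 ≤ r) :
    shapeFunction ν r - shapeFunction ν (r - 1) = r * ν r := by
  obtain ⟨r, rfl⟩ := Nat.exists_eq_add_of_le' hr
  rw [shapeFunction_succ, Nat.add_sub_cancel, add_sub_cancel_left]

theorem shapeFunction_mono (hν : ∀ i, 0 ≤ ν i) : Monotone (shapeFunction ν) :=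
  monotone_nat_of_le_succ fun r => by
    rw [shapeFunction_succ]
    exact le_add_of_nonneg_right (mul_nonneg (Nat.cast_nonneg _) (hν _))

theorem shapeFunction_nonneg (hν : ∀ i, 0 ≤ ν i) (r : ℕ) : 0 ≤ shapeFunction ν r :=
  shapeFunction_zero (ν := ν) ▸ shapeFunction_mono hν (Nat.zero_le r)

theorem shapeFunction_le_mul_sum (hν : ∀ i, 0 ≤ ν i) {r m : ℕ} (hr : r ≤ m) :
    shapeFunction ν r ≤ m * ∑ i ∈ Icc 1 m, ν i := by
  rw [mul_sum]
  calc shapeFunction ν r ≤ shapeFunction ν m := shapeFunction_mono hν hr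
    _ ≤ _ := sum_le_sum fun i hi => by
      gcongr
      · exact hν i
      · exact (mem_Icc.1 hi).2

end ShapeFunction

theorem shape_function_bound_general
    {Ω : Type*} [MeasurableSpace Ω] (P : Measure Ω) [IsProbabilityMeasure P]
    {m : ℕ} (α : ℝ) (hα : α ∈ Set.Ioc (0 : ℝ) 1)
    (ν : ℕ → ℝ) (hν0 : ∀ i, 0 ≤ ν i) (hν1 : ∑ i ∈ Finset.Icc 1 m, ν i = 1)
    (p : Ω → ℝ) (hp : Measurable p)
    (hsuper : ∀ t ∈ Set.Icc (0 : ℝ) 1, P {ω | p ω ≤ t} ≤ ENNReal.ofReal t)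
    (R : Ω → ℕ) (hRval : ∀ ω, R ω ∈ Set.Icc 1 m) :
    ∫ ω, (if p ω ≤ α * (∑ i ∈ Finset.Icc 1 (R ω), (i : ℝ) * ν i) / m
          then (1 : ℝ) / (R ω : ℝ) else 0) ∂P ≤ α / m := by
  obtain ⟨hα0, hα1⟩ := hα
  set t : ℕ → ℝ := fun r => α * shapeFunction ν r / m with ht
  have ht_mono : Monotone t := fun a b hab => by
    simp only [ht]
    gcongr
    exact shapeFunction_mono hν0 hab
  have ht_mem (k : ℕ) (hk : k ≤ m) : t k ∈ Set.Icc 0 1 := by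
    have hβ := shapeFunction_nonneg hν0 k
    have hβm : shapeFunction ν k ≤ 1 * m := by
      simpa [hν1, mul_comm] using shapeFunction_le_mul_sum hν0 hk
    exact ⟨by positivity, div_le_of_le_mul₀ (Nat.cast_nonneg _) zero_le_one
      ((mul_le_of_le_one_left hβ hα1).trans hβm)⟩
  calc _ ≤ ∑ k ∈ Icc 1 m, (1 / (k : ℝ) - 1 / (k + 1 : ℝ)) * t k + 1 / (m + 1 : ℝ) * t m :=
        integral_ite_one_div_le hp ht_mono
          (fun k hk => ENNReal.toReal_le_of_le_ofReal (ht_mem k hk).1 (hsuper _ (ht_mem k hk)))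
          (fun ω => mem_Icc.2 (hRval ω))
    _ = ∑ k ∈ Icc 1 m, (t k - t (k - 1)) / k :=
        sum_Icc_one_div_sub_mul_add_eq t (by simp [ht, shapeFunction_zero]) m
    _ = ∑ k ∈ Icc 1 m, α / m * ν k := sum_congr rfl fun k hk => by
        have hk0 : (k : ℝ) ≠ 0 := Nat.cast_ne_zero.2 (by grind)
        simp only [ht]
        rw [← sub_div, ← mul_sub, shapeFunction_sub_pred (mem_Icc.1 hk).1,
          show α * (k * ν k) / m / k = α / m * ν k * (k / k) by ring, div_self hk0, mul_one]
    _ = α / m := by rw [← mul_sum, hν1, mul_one]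

/-- the shape-function bound under arbitrary dependence: let `ν` be a
probability measure on `{1,…,m}` with shape function `β(r) = ∑_{i=1}^r i·ν({i})`. If `p` is
superuniform on `[0,1]` and `R` is any `{1,…,m}`-valued random variable on the same space
(arbitrary joint dependence), then `E[1{p ≤ αβ(R)/m} / R] ≤ α/m`. -/
theorem shape_function_bound
    {Ω : Type*} [MeasurableSpace Ω] (P : Measure Ω) [IsProbabilityMeasure P]
    {m : ℕ} (hm : 0 < m) (α : ℝ) (hα : α ∈ Set.Ioc (0 : ℝ) 1)
    (ν : ℕ → ℝ) (hν0 : ∀ i, 0 ≤ ν i) (hν1 : ∑ i ∈ Finset.Icc 1 m, ν i = 1)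
    (p : Ω → ℝ) (hp : Measurable p) (hpval : ∀ ω, p ω ∈ Set.Icc (0 : ℝ) 1)
    (hsuper : ∀ t ∈ Set.Icc (0 : ℝ) 1, P {ω | p ω ≤ t} ≤ ENNReal.ofReal t)
    (R : Ω → ℕ) (hR : Measurable R) (hRval : ∀ ω, R ω ∈ Set.Icc 1 m) :
    ∫ ω, (if p ω ≤ α * (∑ i ∈ Finset.Icc 1 (R ω), (i : ℝ) * ν i) / m
          then (1 : ℝ) / (R ω : ℝ) else 0) ∂P ≤ α / m :=
  shape_function_bound_general P α hα ν hν0 hν1 p hp hsuper R hRval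
end

section
/- Let μ be a measure on ℝ and ε > 0 such that Λ(θ) := ∫ e^{θt} dμ(t) ∈ (0,∞) for every θ ≤ ε. For θ ≤ ε let f_θ(t) = e^{θt}/Λ(θ) denote the exponential family density with respect to μ, and let μ_θ = ∫ t f_θ(t) dμ(t) denote its mean (which is finite for all θ < ε). Let h : ℝ → [0,1] be measurable and suppose h(t) = 0 for all t < μ₀, where μ₀ is the mean at θ = 0. Define g(θ) = ∫ h(t) f_θ(t) dμ(t). Then g is nondecreasing on (−∞, 0]; in particular sup_{θ ≤ 0} g(θ) = g(0), i.e., the boundary parameter θ = 0 is least favorable. -/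
/-!
Centre the family at `μ₀`: `g(θ) = N(θ) / D(θ)` with `N(θ) = ∫ h(t) e^{θ(t-μ₀)} dμ` and
`D(θ) = ∫ e^{θ(t-μ₀)} dμ`. Since `h ≥ 0` vanishes where `t - μ₀ < 0`, `N` is nondecreasing in `θ`.
Since `t - μ₀` has `μ`-integral zero, the tangent-line bound `e^{bu} - e^{au} ≤ (b-a)u` for
`a ≤ b ≤ 0` integrates to `D(b) ≤ D(a)`. A nonnegative nondecreasing numerator over a positive
nonincreasing denominator is nondecreasing.
-/

open MeasureTheory ProbabilityTheory Set Real

lemma exp_mul_sub_exp_mul_le {a b : ℝ} (hab : a ≤ b) (hb : b ≤ 0) (u : ℝ) :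
    exp (b * u) - exp (a * u) ≤ (b - a) * u := by
  have tangent : exp (b * u) - exp (a * u) ≤ exp (b * u) * ((b - a) * u) := by
    have hsplit : exp (a * u) = exp (b * u) * exp (a * u - b * u) := by
      rw [← exp_add]; ring_nf
    nlinarith [add_one_le_exp (a * u - b * u), exp_pos (b * u)]
  have opposite_signs : (exp (b * u) - 1) * ((b - a) * u) ≤ 0 := by
    rcases le_total 0 u with hu | hu
    · exact mul_nonpos_of_nonpos_of_nonneg
        (sub_nonpos.2 (exp_le_one_iff.2 (mul_nonpos_of_nonpos_of_nonneg hb hu)))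
        (mul_nonneg (sub_nonneg.2 hab) hu)
    · exact mul_nonpos_of_nonneg_of_nonpos
        (sub_nonneg.2 (one_le_exp (mul_nonneg_of_nonpos_of_nonpos hb hu)))
        (mul_nonpos_of_nonneg_of_nonpos (sub_nonneg.2 hab) hu)
  linarith

section

variable {Ω : Type*} [MeasurableSpace Ω] {μ : Measure Ω}

lemma antitoneOn_mgf_of_integral_eq_zero {X : Ω → ℝ} (hX : Integrable X μ)
    (hX0 : ∫ ω, X ω ∂μ = 0) (hexp : ∀ θ ≤ 0, Integrable (fun ω => exp (θ * X ω)) μ) :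
    AntitoneOn (mgf X μ) (Iic 0) := by
  intro a ha b hb hab
  have hint : Integrable (fun ω => exp (a * X ω) + (b - a) * X ω) μ :=
    (hexp a ha).add (hX.const_mul _)
  calc mgf X μ b ≤ ∫ ω, (exp (a * X ω) + (b - a) * X ω) ∂μ :=
        integral_mono (hexp b hb) hint fun ω => by
          linarith [exp_mul_sub_exp_mul_le hab hb (X ω)]
    _ = mgf X μ a := by
        rw [integral_add (hexp a ha) (hX.const_mul _), integral_const_mul, hX0, mul_zero,
          add_zero, mgf]

lemma monotoneOn_integral_mul_exp {w X : Ω → ℝ} {s : Set ℝ} (hw : ∀ ω, 0 ≤ w ω)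
    (hwX : ∀ ω, X ω < 0 → w ω = 0)
    (hint : ∀ θ ∈ s, Integrable (fun ω => w ω * exp (θ * X ω)) μ) :
    MonotoneOn (fun θ => ∫ ω, w ω * exp (θ * X ω) ∂μ) s := by
  intro a ha b hb hab
  refine integral_mono (hint a ha) (hint b hb) fun ω => ?_
  rcases lt_or_ge (X ω) 0 with hX | hX
  · simp [hwX ω hX]
  · exact mul_le_mul_of_nonneg_left (exp_le_exp.2 (mul_le_mul_of_nonneg_right hab hX)) (hw ω)

end

lemma MonotoneOn.div_of_antitoneOn {α : Type*} [Preorder α] {N D : α → ℝ} {s : Set α}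
    (hN : MonotoneOn N s) (hD : AntitoneOn D s) (hN0 : ∀ x ∈ s, 0 ≤ N x)
    (hD0 : ∀ x ∈ s, 0 < D x) : MonotoneOn (fun x => N x / D x) s :=
  fun _ ha b hb hab => div_le_div₀ (hN0 b hb) (hN ha hb hab) (hD0 b hb) (hD ha hb hab)

lemma exp_mul_div_integral_exp_eq (μ : Measure ℝ) (m θ t : ℝ) :
    exp (θ * t) / ∫ s, exp (θ * s) ∂μ = exp (θ * (t - m)) / mgf (fun s => s - m) μ θ := by
  have hmgf : mgf (fun s => s - m) μ θ = (∫ s, exp (θ * s) ∂μ) * exp (-(θ * m)) := by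
    simp_rw [mgf, mul_sub, sub_eq_add_neg, exp_add]
    exact integral_mul_const _ _
  rw [hmgf, mul_sub, exp_sub, exp_neg]
  field_simp

/-- Proposition 1, the boundary is least favorable in a one-parameter
exponential family: let `μ` be a measure on `ℝ` with `Λ(θ) = ∫ e^{θt} dμ(t) ∈ (0,∞)` for all
`θ ≤ ε` (so the exponential family densities `f_θ(t) = e^{θt}/Λ(θ)` and their means
`μ_θ = ∫ t f_θ(t) dμ(t)` are defined, the means being finite for `θ < ε`). If `h : ℝ → [0,1]`
is measurable and vanishes on `(−∞, μ₀)`, then `g(θ) = ∫ h(t) f_θ(t) dμ(t)` is nondecreasing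
on `(−∞, 0]`; in particular `g(θ) ≤ g(0)` for all `θ ≤ 0`. -/
theorem boundary_least_favorable
    (μ : Measure ℝ) (ε : ℝ) (hε : 0 < ε)
    (hΛ : ∀ θ ≤ ε, Integrable (fun t => Real.exp (θ * t)) μ ∧
      0 < ∫ t, Real.exp (θ * t) ∂μ)
    (f : ℝ → ℝ → ℝ)
    (hf : ∀ θ t, f θ t = Real.exp (θ * t) / ∫ s, Real.exp (θ * s) ∂μ)
    (hmeanInt : ∀ θ < ε, Integrable (fun t => t * f θ t) μ)
    (μ₀ : ℝ) (hμ₀ : μ₀ = ∫ t, t * f 0 t ∂μ)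
    (h : ℝ → ℝ) (hhm : Measurable h) (hhval : ∀ t, h t ∈ Set.Icc (0 : ℝ) 1)
    (hh0 : ∀ t < μ₀, h t = 0)
    (g : ℝ → ℝ) (hg : ∀ θ, g θ = ∫ t, h t * f θ t ∂μ) :
    MonotoneOn g (Set.Iic (0 : ℝ)) ∧ ∀ θ ≤ (0 : ℝ), g θ ≤ g 0 := by
  have hexp : ∀ θ ≤ 0, Integrable (fun t => exp (θ * t)) μ :=
    fun θ hθ => (hΛ θ (hθ.trans hε.le)).1
  have hmass : 0 < μ.real univ := by simpa using (hΛ 0 hε.le).2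
  have : IsFiniteMeasure μ :=
    (integrable_const_iff_isFiniteMeasure one_ne_zero).1 (by simpa using hexp 0 le_rfl)
  have hf0 : ∀ t, f 0 t = (μ.real univ)⁻¹ := fun t => by simp [hf]
  have hid : Integrable (fun t => t) μ := by
    have := hmeanInt 0 hε
    simp only [hf0] at this
    exact (integrable_mul_const_iff (inv_ne_zero hmass.ne').isUnit _).1 this
  have hμ₀_avg : μ₀ = ⨍ t, t ∂μ := by
    rw [hμ₀, funext hf0, integral_mul_const, average_eq, smul_eq_mul, mul_comm]
  have hcentered : ∫ t, (t - μ₀) ∂μ = 0 := hμ₀_avg ▸ integral_sub_average μ _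
  have hD_int : ∀ θ ≤ 0, Integrable (fun t => exp (θ * (t - μ₀))) μ := fun θ hθ => by
    simpa only [mul_sub, exp_sub] using (hexp θ hθ).div_const (exp (θ * μ₀))
  have hN_int : ∀ θ ∈ Iic (0 : ℝ), Integrable (fun t => h t * exp (θ * (t - μ₀))) μ :=
    fun θ hθ => (hD_int θ hθ).bdd_mul (c := 1) hhm.aestronglyMeasurable
      (.of_forall fun t => (norm_of_nonneg (hhval t).1).trans_le (hhval t).2)
  have hg_eq : g = fun θ => (∫ t, h t * exp (θ * (t - μ₀)) ∂μ) / mgf (fun t => t - μ₀) μ θ := by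
    ext θ
    simp only [hg, hf, exp_mul_div_integral_exp_eq μ μ₀, mul_div_assoc', integral_div]
  have hmono : MonotoneOn g (Iic 0) := by
    rw [hg_eq]
    refine (monotoneOn_integral_mul_exp (fun t => (hhval t).1)
      (fun t ht => hh0 t (sub_neg.1 ht)) hN_int).div_of_antitoneOn
      (antitoneOn_mgf_of_integral_eq_zero (hid.sub (integrable_const _)) hcentered hD_int)
      (fun θ _ => integral_nonneg fun t => mul_nonneg (hhval t).1 (exp_pos _).le)
      (fun θ hθ => mgf_pos' (by rintro rfl; simp at hmass) (hD_int θ hθ))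
  exact ⟨hmono, fun θ hθ => hmono hθ self_mem_Iic hθ⟩
end

section
/- Fix β > 1. For each integer m ≥ 2, define L = ⌊ log((β−1)(m−1)+1) / log β ⌋ and the integer sequence a_ℓ = ⌈ (β^{ℓ−1} − 1)/(β − 1) + 1 ⌉ for ℓ = 1,...,L (with a₀ = 0), and define L_{m,a} = ∑_{ℓ=1}^L (a_ℓ − a_{ℓ−1})/a_ℓ. Then L_{m,a} = ((β−1)/(β log β)) · log m + O(1) as m → ∞; that is, there exists a constant C (depending only on β) such that | L_{m,a} − ((β−1)/(β log β)) log m | ≤ C for all m ≥ 2. -/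
/-- The geometrically increasing integer sequence `a_ℓ = ⌈(β^{ℓ−1} − 1)/(β − 1) + 1⌉` for
`ℓ ≥ 1`, with the convention `a₀ = 0`. -/
noncomputable def aSeq (β : ℝ) : ℕ → ℕ
  | 0 => 0
  | (ℓ + 1) => ⌈(β ^ ℓ - 1) / (β - 1) + 1⌉₊

/-- The number of change points `L = ⌊log((β−1)(m−1)+1) / log β⌋`. -/
noncomputable def numKnots (β : ℝ) (m : ℕ) : ℕ :=
  ⌊Real.log ((β - 1) * ((m : ℝ) - 1) + 1) / Real.log β⌋₊

/-- The correction factor `L_{m,a} = ∑_{ℓ=1}^L (a_ℓ − a_{ℓ−1})/a_ℓ`. -/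
noncomputable def corrFactor (β : ℝ) (m : ℕ) : ℝ :=
  ∑ ℓ ∈ Finset.Icc 1 (numKnots β m),
    ((aSeq β ℓ : ℝ) - (aSeq β (ℓ - 1) : ℝ)) / (aSeq β ℓ : ℝ)

/-!
Since `a_{ℓ+1}` is `(β^ℓ - 1)/(β - 1) + 1` rounded up, `a_{ℓ+1} - β a_ℓ` stays bounded while
`a_{ℓ+1} ≥ β^{ℓ-1}`. Hence the `ℓ`-th summand `1 - a_{ℓ-1}/a_ℓ` is `(β - 1)/β + O(β^{-ℓ})`, and the
errors sum to `O(1)`, giving `L_{m,a} = L (β - 1)/β + O(1)`. Finally `L = log_β m + O(1)`, because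
the argument of the logarithm defining `L` lies between `(β - 1) m / 2` and `β m`.
-/

open Finset Real

lemma abs_sum_range_sub_mul_le_of_geometric {u : ℕ → ℝ} {c K r : ℝ} (hr₀ : 0 ≤ r) (hr₁ : r < 1)
    (hu : ∀ ℓ, |u ℓ - c| ≤ K * r ^ ℓ) (L : ℕ) :
    |∑ ℓ ∈ range L, u ℓ - L * c| ≤ K / (1 - r) := by
  have hK : 0 ≤ K := by simpa using (abs_nonneg _).trans (hu 0)
  calc |∑ ℓ ∈ range L, u ℓ - L * c|
      = |∑ ℓ ∈ range L, (u ℓ - c)| := by simp [sum_sub_distrib]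
    _ ≤ ∑ ℓ ∈ range L, K * r ^ ℓ := (abs_sum_le_sum_abs _ _).trans (sum_le_sum fun ℓ _ => hu ℓ)
    _ = K * ∑ ℓ ∈ Ico 0 L, r ^ ℓ := by rw [← mul_sum, range_eq_Ico]
    _ ≤ K * (r ^ 0 / (1 - r)) := by gcongr; exact geom_sum_Ico_le_of_lt_one hr₀ hr₁
    _ = K / (1 - r) := by rw [pow_zero, mul_one_div]

section

variable {β : ℝ}

lemma le_aSeq_succ (ℓ : ℕ) : (β ^ ℓ - 1) / (β - 1) + 1 ≤ (aSeq β (ℓ + 1) : ℝ) :=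
  Nat.le_ceil _

lemma aSeq_succ_lt (hβ : 1 < β) (ℓ : ℕ) :
    (aSeq β (ℓ + 1) : ℝ) < (β ^ ℓ - 1) / (β - 1) + 2 := by
  have : 0 ≤ (β ^ ℓ - 1) / (β - 1) :=
    div_nonneg (sub_nonneg.2 (one_le_pow₀ hβ.le)) (sub_pos.2 hβ).le
  have := Nat.ceil_lt_add_one (show 0 ≤ (β ^ ℓ - 1) / (β - 1) + 1 by linarith)
  simp only [aSeq]
  linarith

lemma pow_le_mul_aSeq_succ (hβ : 1 < β) (ℓ : ℕ) : β ^ ℓ ≤ β * aSeq β (ℓ + 1) := by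
  have hβ₁ : 0 < β - 1 := sub_pos.2 hβ
  have key : β ^ ℓ ≤ β * ((β ^ ℓ - 1) / (β - 1) + 1) := by
    rw [div_add_one hβ₁.ne', mul_div_assoc', le_div_iff₀ hβ₁]
    nlinarith [one_le_pow₀ (M₀ := ℝ) hβ.le (n := ℓ)]
  exact key.trans (mul_le_mul_of_nonneg_left (le_aSeq_succ ℓ) (by linarith))

/-- The real knots `x_ℓ = (β^ℓ - 1)/(β - 1) + 1` satisfy `x_{ℓ+1} = β x_ℓ + 2 - β`; rounding up
perturbs this recursion by less than `1 + β`. -/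
lemma abs_aSeq_succ_sub_mul_aSeq_le (hβ : 1 < β) (ℓ : ℕ) :
    |(aSeq β (ℓ + 1) : ℝ) - β * aSeq β ℓ| ≤ 2 * β := by
  cases ℓ with
  | zero =>
    simpa [aSeq] using (by linarith : (1 : ℝ) ≤ 2 * β)
  | succ k =>
    have hrec : (β ^ (k + 1) - 1) / (β - 1) = β * ((β ^ k - 1) / (β - 1)) + 1 := by
      field_simp [(sub_pos.2 hβ).ne']
      ring
    have := le_aSeq_succ (β := β) k
    have := le_aSeq_succ (β := β) (k + 1)
    have := aSeq_succ_lt hβ k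
    have := aSeq_succ_lt hβ (k + 1)
    rw [abs_le]
    constructor <;> nlinarith

lemma abs_corrFactor_summand_sub_le (hβ : 1 < β) (ℓ : ℕ) :
    |((aSeq β (ℓ + 1) : ℝ) - aSeq β ℓ) / aSeq β (ℓ + 1) - (β - 1) / β| ≤ 2 * β * β⁻¹ ^ ℓ := by
  have hβ₀ : 0 < β := by linarith
  have hpow : 0 < β ^ ℓ := pow_pos hβ₀ ℓ
  have ha : 0 < β * aSeq β (ℓ + 1) := hpow.trans_le (pow_le_mul_aSeq_succ hβ ℓ)
  have ha' : (aSeq β (ℓ + 1) : ℝ) ≠ 0 := by rintro h; simp [h] at ha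
  calc |((aSeq β (ℓ + 1) : ℝ) - aSeq β ℓ) / aSeq β (ℓ + 1) - (β - 1) / β|
      = |(aSeq β (ℓ + 1) : ℝ) - β * aSeq β ℓ| / (β * aSeq β (ℓ + 1)) := by
        rw [← abs_of_pos ha, ← abs_div]
        congr 1
        field_simp
        ring
    _ ≤ 2 * β / β ^ ℓ :=
        div_le_div₀ (by positivity) (abs_aSeq_succ_sub_mul_aSeq_le hβ ℓ) hpow
          (pow_le_mul_aSeq_succ hβ ℓ)
    _ = 2 * β * β⁻¹ ^ ℓ := by rw [inv_pow, div_eq_mul_inv]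

lemma abs_corrFactor_sub_numKnots_mul_le (hβ : 1 < β) (m : ℕ) :
    |corrFactor β m - numKnots β m * ((β - 1) / β)| ≤ 2 * β / (1 - β⁻¹) := by
  have hsum : corrFactor β m = ∑ ℓ ∈ range (numKnots β m),
      ((aSeq β (ℓ + 1) : ℝ) - aSeq β ℓ) / aSeq β (ℓ + 1) := by
    rw [corrFactor, ← Ico_add_one_right_eq_Icc, sum_Ico_eq_sum_range]
    simp [add_comm]
  rw [hsum]
  exact abs_sum_range_sub_mul_le_of_geometric (by positivity) (inv_lt_one_of_one_lt₀ hβ)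
    (abs_corrFactor_summand_sub_le hβ) _

lemma abs_numKnots_sub_logb_le (hβ : 1 < β) {m : ℕ} (hm : 2 ≤ m) :
    |(numKnots β m : ℝ) - logb β m| ≤ 2 + |logb β ((β - 1) / 2)| := by
  have hm' : (2 : ℝ) ≤ m := by exact_mod_cast hm
  have hβ₁ : 0 < β - 1 := sub_pos.2 hβ
  set x : ℝ := (β - 1) * ((m : ℝ) - 1) + 1
  have hlow : (β - 1) / 2 * m ≤ x := by nlinarith
  have hupp : x ≤ β * m := by nlinarith
  have hlowpos : 0 < (β - 1) / 2 * m := by positivity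
  have hx : 1 ≤ x := by nlinarith
  have hfloor_le : (numKnots β m : ℝ) ≤ logb β x :=
    Nat.floor_le (logb_nonneg hβ hx)
  have hlt_floor : logb β x < numKnots β m + 1 := Nat.lt_floor_add_one _
  have hxlow := logb_le_logb_of_le hβ hlowpos hlow
  have hxupp := logb_le_logb_of_le hβ (by linarith) hupp
  rw [logb_mul (by positivity) (by positivity)] at hxlow
  rw [logb_mul (by positivity) (by positivity), logb_self_eq_one hβ] at hxupp
  have := neg_abs_le (logb β ((β - 1) / 2))
  rw [abs_le]
  constructor <;> linarith

end

/-- asymptotics of the correction factor of the geometric sparse step-up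
procedure: for fixed `β > 1`, `L_{m,a} = ((β−1)/(β log β))·log m + O(1)` as `m → ∞`. -/
theorem corrFactor_asymptotics (β : ℝ) (hβ : 1 < β) :
    ∃ C : ℝ, ∀ m : ℕ, 2 ≤ m →
      |corrFactor β m - ((β - 1) / (β * Real.log β)) * Real.log m| ≤ C := by
  set c := (β - 1) / β
  have hc : 0 ≤ c := div_nonneg (by linarith) (by linarith)
  refine ⟨2 * β / (1 - β⁻¹) + c * (2 + |logb β ((β - 1) / 2)|), fun m hm => ?_⟩
  have htarget : (β - 1) / (β * Real.log β) * Real.log m = c * logb β m := by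
    rw [logb]
    ring
  rw [htarget]
  calc |corrFactor β m - c * logb β m|
      = |(corrFactor β m - numKnots β m * c) + c * ((numKnots β m : ℝ) - logb β m)| := by ring_nf
    _ ≤ |corrFactor β m - numKnots β m * c| + |c * ((numKnots β m : ℝ) - logb β m)| :=
        abs_add_le _ _
    _ = |corrFactor β m - numKnots β m * c| + c * |(numKnots β m : ℝ) - logb β m| := by
        rw [abs_mul, abs_of_nonneg hc]
    _ ≤ _ := add_le_add (abs_corrFactor_sub_numKnots_mul_le hβ m)
        (mul_le_mul_of_nonneg_left (abs_numKnots_sub_logb_le hβ hm) hc)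
end

section
/- For real numbers a, b, c with c > 0, define m(t) = a√(1+t²) + bt for t > 0. Suppose the equation m(t) = c has at least one solution t > 0, and suppose either a < |b| with a ≠ ±b, or a > b > 0. Then the equation m(t) = c has exactly one positive solution, given by t₁ = (bc − sign(b)·a·√(b² + c² − a²)) / (b² − a²), and the derivative satisfies sign(m′(t₁)) = sign(b), where m′(t) = at/√(1+t²) + b. -/
/-- The reconstructed t-statistic function `m(t) = a√(1+t²) + bt`. -/
noncomputable def mFun (a b t : ℝ) : ℝ := a * Real.sqrt (1 + t ^ 2) + b * t

/-- Its derivative `m′(t) = at/√(1+t²) + b`. -/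
noncomputable def mDeriv (a b t : ℝ) : ℝ := a * t / Real.sqrt (1 + t ^ 2) + b

/-- The knot `t₁ = (bc − sign(b)·a·√(b² + c² − a²)) / (b² − a²)`. -/
noncomputable def knot1 (a b c : ℝ) : ℝ :=
  (b * c - Real.sign b * a * Real.sqrt (b ^ 2 + c ^ 2 - a ^ 2)) / (b ^ 2 - a ^ 2)

private lemma sqrt_diff_facts {s u : ℝ} (hs : 0 ≤ s) (hsu : s < u) :
    Real.sqrt (1 + s ^ 2) ≤ Real.sqrt (1 + u ^ 2) ∧
      Real.sqrt (1 + u ^ 2) - Real.sqrt (1 + s ^ 2) < u - s := by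
  set S := Real.sqrt (1 + s ^ 2) with hSdef
  set U := Real.sqrt (1 + u ^ 2) with hUdef
  have hS2 : S ^ 2 = 1 + s ^ 2 := Real.sq_sqrt (by positivity)
  have hU2 : U ^ 2 = 1 + u ^ 2 := Real.sq_sqrt (by positivity)
  have hsS : s < S := Real.lt_sqrt_of_sq_lt (by linarith)
  have huU : u < U := Real.lt_sqrt_of_sq_lt (by linarith)
  have hle : S ≤ U := Real.sqrt_le_sqrt (by nlinarith)
  refine ⟨hle, ?_⟩
  have h1 : (U - S) * (U + S) = (u - s) * (u + s) := by linear_combination hU2 - hS2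
  have hUS0 : 0 < U + S := by linarith
  nlinarith [mul_pos (sub_pos.2 hsu) hUS0]

private lemma mFun_strict (a b s u : ℝ) (hs : 0 ≤ s) (hsu : s < u) :
    ∃ d, mFun a b u - mFun a b s = a * d + b * (u - s) ∧ 0 ≤ d ∧ d < u - s := by
  obtain ⟨h1, h2⟩ := sqrt_diff_facts hs hsu
  exact ⟨Real.sqrt (1 + u ^ 2) - Real.sqrt (1 + s ^ 2), by unfold mFun; ring,
    by linarith, h2⟩

private lemma knot_formula (a b c t S : ℝ) (hS0 : 0 < S) (hS2 : S ^ 2 = 1 + t ^ 2)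
    (haS : a * S = c - b * t) (hne : b ^ 2 - a ^ 2 ≠ 0)
    (hsgn : Real.sign b * Real.sqrt (b ^ 2 + c ^ 2 - a ^ 2) = (b + c * t) / S) :
    knot1 a b c = t := by
  unfold knot1
  rw [mul_assoc, mul_comm a, ← mul_assoc, hsgn, div_eq_iff hne]
  have h2 : a * ((b + c * t) / S) = b * c - t * (b ^ 2 - a ^ 2) := by
    rw [← mul_div_assoc, div_eq_iff hS0.ne']
    linear_combination (b * S - a * t) * haS - a * b * hS2
  linarith [h2]

set_option maxHeartbeats 1000000 in
/-- Proposition 3, cases (4)–(5): the unique positive knot: let `c > 0` and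
suppose `m(t) = a√(1+t²) + bt = c` has at least one positive solution. If either `a < |b|`
with `a ≠ ±b`, or `a > b > 0`, then the equation has exactly one positive solution, namely
`t₁ = (bc − sign(b)·a·√(b²+c²−a²))/(b²−a²)`, and `sign(m′(t₁)) = sign(b)`. -/
theorem unique_positive_knot (a b c : ℝ) (hc : 0 < c)
    (hex : ∃ t, 0 < t ∧ mFun a b t = c)
    (hcase : (a < |b| ∧ a ≠ b ∧ a ≠ -b) ∨ (b < a ∧ 0 < b)) :
    0 < knot1 a b c ∧ mFun a b (knot1 a b c) = c ∧
      (∀ t, 0 < t → mFun a b t = c → t = knot1 a b c) ∧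
      Real.sign (mDeriv a b (knot1 a b c)) = Real.sign b := by
  obtain ⟨t, ht, hmt⟩ := hex
  have hmt' : a * Real.sqrt (1 + t ^ 2) + b * t = c := hmt
  set S := Real.sqrt (1 + t ^ 2) with hSdef
  have hS2 : S ^ 2 = 1 + t ^ 2 := Real.sq_sqrt (by positivity)
  have htS : t < S := Real.lt_sqrt_of_sq_lt (by linarith)
  have hS0 : 0 < S := lt_trans ht htS
  have haS : a * S = c - b * t := by linarith
  have haneb : a ≠ b := by
    rcases hcase with ⟨_, h2, _⟩ | ⟨h1, _⟩
    · exact h2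
    · exact fun h => absurd h.symm (ne_of_lt h1)
  -- the two genuine regimes
  have hkey : (0 < b ∧ 0 < a + b) ∨ (b < 0 ∧ a + b < 0 ∧ 0 < a) := by
    rcases hcase with ⟨h1, h2, h3⟩ | ⟨h1, h2⟩
    · rcases lt_trichotomy b 0 with hb | hb | hb
      · refine Or.inr ⟨hb, ?_, ?_⟩
        · rw [abs_of_neg hb] at h1; linarith
        · by_contra hh
          push_neg at hh
          nlinarith [mul_le_mul_of_nonneg_right hh hS0.le, mul_pos (neg_pos.2 hb) ht]
      · exfalso
        rw [hb, abs_zero] at h1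
        rw [hb] at haS
        nlinarith [mul_neg_of_neg_of_pos h1 hS0]
      · refine Or.inl ⟨hb, ?_⟩
        rw [abs_of_pos hb] at h1
        by_contra hh
        push_neg at hh
        have ha' : a < -b := lt_of_le_of_ne (by linarith) h3
        have ha0 : a < 0 := by linarith
        nlinarith [mul_lt_mul_of_neg_left htS ha0, mul_pos (show (0:ℝ) < -(a+b) by linarith) ht]
    · exact Or.inl ⟨h2, by linarith⟩
  -- key algebraic identity
  have hbct : b + c * t = S * (b * S + a * t) := by
    linear_combination (-t) * haS + (-b) * hS2
  have hDsq : (b ^ 2 + c ^ 2 - a ^ 2) * S ^ 2 = (b + c * t) ^ 2 := by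
    linear_combination (-(a * S + c - b * t)) * haS + (b ^ 2 + c ^ 2) * hS2
  -- the sign computation, per regime
  have hne : b ^ 2 - a ^ 2 ≠ 0 := by
    rcases hkey with ⟨hb, hab⟩ | ⟨hb, hab, _⟩
    · intro h
      exact absurd (by linear_combination h) (mul_ne_zero (sub_ne_zero.2 (Ne.symm haneb))
        (ne_of_gt (by linarith : (0:ℝ) < b + a)))
    · intro h
      exact absurd (by linear_combination h) (mul_ne_zero (sub_ne_zero.2 (Ne.symm haneb))
        (ne_of_lt (by linarith : b + a < 0)))
  have hsgn : Real.sign b * Real.sqrt (b ^ 2 + c ^ 2 - a ^ 2) = (b + c * t) / S := by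
    rcases hkey with ⟨hb, hab⟩ | ⟨hb, hab, ha⟩
    · have hbct0 : 0 < b + c * t := by positivity
      have hD' : b ^ 2 + c ^ 2 - a ^ 2 = ((b + c * t) / S) ^ 2 := by
        field_simp
        linarith [hDsq]
      rw [Real.sign_of_pos hb, hD', Real.sqrt_sq (le_of_lt (div_pos hbct0 hS0)), one_mul]
    · have hbsat : b * S + a * t < 0 := by
        nlinarith [mul_lt_mul_of_neg_left htS hb, mul_neg_of_neg_of_pos hab ht]
      have hbct0 : b + c * t < 0 := by
        rw [hbct]; exact mul_neg_of_pos_of_neg hS0 hbsat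
      have hD' : b ^ 2 + c ^ 2 - a ^ 2 = (-((b + c * t) / S)) ^ 2 := by
        field_simp
        linarith [hDsq]
      rw [Real.sign_of_neg hb, hD', Real.sqrt_sq (le_of_lt (neg_pos.2 (div_neg_of_neg_of_pos hbct0 hS0)))]
      ring
  have hknot : knot1 a b c = t := knot_formula a b c t S hS0 hS2 haS hne hsgn
  -- injectivity of mFun on positives
  have hinj : ∀ p q : ℝ, 0 ≤ p → p < q → mFun a b p ≠ mFun a b q := by
    intro p q hp hpq heq
    obtain ⟨d, hd, hd0, hdlt⟩ := mFun_strict a b p q hp hpq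
    rw [heq, sub_self] at hd
    rcases hkey with ⟨hb, hab⟩ | ⟨hb, hab, ha⟩
    · rcases le_or_gt 0 a with ha' | ha'
      · nlinarith [mul_nonneg ha' hd0, mul_pos hb (sub_pos.2 hpq)]
      · nlinarith [mul_lt_mul_of_neg_left hdlt ha', mul_pos (show (0:ℝ) < a + b by linarith)
          (sub_pos.2 hpq)]
    · nlinarith [mul_le_mul_of_nonneg_left hdlt.le ha.le,
        mul_neg_of_neg_of_pos hab (sub_pos.2 hpq)]
  -- derivative value
  have hderiv : mDeriv a b t = (a * t + b * S) / S := by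
    show a * t / S + b = _
    field_simp
  refine ⟨by rw [hknot]; exact ht, by rw [hknot]; exact hmt, ?_, ?_⟩
  · intro u hu hmu
    rw [hknot]
    by_contra hne'
    rcases lt_or_gt_of_ne hne' with h | h
    · exact hinj u t hu.le h (hmu.trans hmt.symm)
    · exact hinj t u ht.le h (hmt.trans hmu.symm)
  · rw [hknot, hderiv]
    rcases hkey with ⟨hb, hab⟩ | ⟨hb, hab, ha⟩
    · have h1 : 0 < a * t + b * S := by
        rcases le_or_gt 0 a with ha' | ha'
        · nlinarith [mul_nonneg ha' ht.le, mul_pos hb hS0]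
        · nlinarith [mul_lt_mul_of_neg_left htS ha', mul_pos (show (0:ℝ) < a + b by linarith) ht]
      rw [Real.sign_of_pos (div_pos h1 hS0), Real.sign_of_pos hb]
    · have h1 : a * t + b * S < 0 := by
        nlinarith [mul_lt_mul_of_pos_left htS ha, mul_neg_of_neg_of_pos hab hS0]
      rw [Real.sign_of_neg (div_neg_of_neg_of_pos h1 hS0), Real.sign_of_neg hb]
end
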